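/- arXiv:math/0403023 — 9 statements merged into one kernel-verified Lean document; each statement's English description precedes it below -/
import Mathlib

section
/- If real numbers α₁₂, α₂₁, α₁₃, α₃₁, α₂₃, α₃₂ satisfy α_ij·α_ji = 1 for each pair {i,j} ⊆ {1,2,3}, |1 - α_ij| ≤ 1 for all distinct i,j, and |1 - α_ij - α_ik| ≤ 1 for all distinct i,j,k, then every α_ij = 1. -/
lemma aux_ge (a b : ℝ) (hm : a * b = 1) (ha : 0 ≤ a) : 2 ≤ a + b := by
  have ha' : 0 < a := ha.lt_of_ne (by rintro rfl; simp at hm)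
  nlinarith [sq_nonneg (a - 1)]

lemma aux_eq (a b : ℝ) (hm : a * b = 1) (he : a + b = 2) : a = 1 := by
  nlinarith [sq_nonneg (a - 1)]

theorem stmt_0 (α : Fin 3 → Fin 3 → ℝ)
    (hmul : ∀ i j : Fin 3, i ≠ j → α i j * α j i = 1)
    (h1 : ∀ i j : Fin 3, i ≠ j → |1 - α i j| ≤ 1)
    (h2 : ∀ i j k : Fin 3, i ≠ j → i ≠ k → j ≠ k → |1 - α i j - α i k| ≤ 1) :
    ∀ i j : Fin 3, i ≠ j → α i j = 1 := by
  have m01 := hmul 0 1 (by decide)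
  have m02 := hmul 0 2 (by decide)
  have m12 := hmul 1 2 (by decide)
  have s0 := (abs_le.mp (h2 0 1 2 (by decide) (by decide) (by decide))).1
  have s1 := (abs_le.mp (h2 1 0 2 (by decide) (by decide) (by decide))).1
  have s2 := (abs_le.mp (h2 2 0 1 (by decide) (by decide) (by decide))).1
  have b01 := (abs_le.mp (h1 0 1 (by decide))).2
  have b02 := (abs_le.mp (h1 0 2 (by decide))).2
  have b12 := (abs_le.mp (h1 1 2 (by decide))).2
  have p01 := aux_ge _ _ m01 (by linarith)
  have p02 := aux_ge _ _ m02 (by linarith)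
  have p12 := aux_ge _ _ m12 (by linarith)
  have e01 : α 0 1 + α 1 0 = 2 := by linarith
  have e02 : α 0 2 + α 2 0 = 2 := by linarith
  have e12 : α 1 2 + α 2 1 = 2 := by linarith
  have v01 := aux_eq _ _ m01 e01
  have v02 := aux_eq _ _ m02 e02
  have v12 := aux_eq _ _ m12 e12
  have v10 : α 1 0 = 1 := by linarith
  have v20 : α 2 0 = 1 := by linarith
  have v21 : α 2 1 = 1 := by linarith
  intro i j hij
  fin_cases i <;> fin_cases j <;> simp_all
end

section
/- Under the hypotheses of the previous statement (complex α_jk, j,k ∈ {1,2,3,4} distinct, with α_jk·α_kj = 1 and the 28 disc inequalities), there exist distinct indices j,k,l,m with {j,k,l,m} = {1,2,3,4} such that α_jl = α_lj = α_km = α_mk = 1. -/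
lemma stmt8_sqle {t : ℝ} (h0 : 0 ≤ t) (h1 : t ≤ 1/2) : t^2 ≤ 1/4 := by nlinarith
lemma stmt8_sqmono {a b : ℝ} (h0 : 0 ≤ a) (h : a ≤ b) : a^2 ≤ b^2 := by nlinarith
lemma stmt8_lesq {c p : ℝ} (h : c^2 ≤ p^2) (hp : 0 ≤ p) : c ≤ p := by
  nlinarith [sq_nonneg (c-p), sq_nonneg (c+p)]

lemma stmt8_P (a b : ℝ) (ha : 0 ≤ a) (hb : 0 ≤ b) (hab : (a+b)^2 ≤ 1/4) :
    (1/4 - (a+b)^2)^2 ≤ (1/4 - a^2) * (1/4 - b^2) := by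
  nlinarith [mul_nonneg ha hb, sq_nonneg (a*b), sq_nonneg (a+b),
    mul_nonneg (sq_nonneg (a+b)) (sub_nonneg.mpr hab)]

lemma stmt8_core (x1 y1 x2 y2 x3 y3 : ℝ)
    (hx1 : 0 ≤ x1) (hx1' : x1 ≤ 1/2) (hx2 : 0 ≤ x2) (hx2' : x2 ≤ 1/2)
    (hx3 : 0 ≤ x3) (hx3' : x3 ≤ 1/2)
    (he1 : x1*(1-x1) ≤ y1^2) (he2 : x2*(1-x2) ≤ y2^2)
    (hb3 : x3^2 + y3^2 ≤ 1)
    (hp : (x1+x2-1)^2 + (y1+y2)^2 ≤ 1)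
    (ht : 1 ≤ x1+x2+x3)
    (hy1 : 0 ≤ y1) (hy2 : 0 ≤ y2) :
    y1^2+y2^2+y3^2 ≤ 3/2 := by
  rcases le_or_gt (x1+x2) (1/2) with hs | hs
  · have hq : (1/2:ℝ)^2 ≤ (1-x1-x2)^2 :=
      stmt8_sqmono (by norm_num) (by linarith)
    have hq3 : (1/4:ℝ) ≤ x3^2 :=
      le_trans (by norm_num) (stmt8_sqmono (by norm_num : (0:ℝ) ≤ 1/2) (by linarith))
    linarith [hp, hb3, mul_nonneg hy1 hy2, hq, hq3]
  · have ha : (0:ℝ) ≤ 1/2 - x1 := by linarith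
    have hb : (0:ℝ) ≤ 1/2 - x2 := by linarith
    have hab : ((1/2-x1)+(1/2-x2))^2 ≤ 1/4 := by
      have := stmt8_sqle (t := (1/2-x1)+(1/2-x2)) (by linarith) (by linarith)
      linarith [this]
    have hP := stmt8_P (1/2-x1) (1/2-x2) ha hb hab
    have hP' : (1/4 - (1-x1-x2)^2)^2 ≤ (x1*(1-x1))*(x2*(1-x2)) := by
      have e1 : (1/4 - ((1/2-x1)+(1/2-x2))^2)^2 = (1/4 - (1-x1-x2)^2)^2 := by ring
      have e2 : (1/4 - (1/2-x1)^2) * (1/4 - (1/2-x2)^2) = (x1*(1-x1))*(x2*(1-x2)) := by ring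
      rw [e1, e2] at hP; exact hP
    have h1 : (x1*(1-x1))*(x2*(1-x2)) ≤ (y1*y2)^2 := by
      have e2pos : (0:ℝ) ≤ x2*(1-x2) := mul_nonneg hx2 (by linarith)
      have h := mul_le_mul he1 he2 e2pos (sq_nonneg y1)
      calc (x1*(1-x1))*(x2*(1-x2)) ≤ y1^2 * y2^2 := h
        _ = (y1*y2)^2 := by ring
    have hprod : (1/4 - (1-x1-x2)^2)^2 ≤ (y1*y2)^2 := le_trans hP' h1
    have hyy : 1/4 - (1-x1-x2)^2 ≤ y1*y2 :=
      stmt8_lesq hprod (mul_nonneg hy1 hy2)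
    have hx3sq : (1-x1-x2)^2 ≤ x3^2 :=
      stmt8_sqmono (by linarith) (by linarith)
    linarith [hp, hyy, hb3, hx3sq, sq_nonneg (y1+y2)]

lemma stmt8_rowY (x1 y1 x2 y2 x3 y3 : ℝ)
    (hx1 : 0 ≤ x1) (hx1' : x1 ≤ 1/2) (hx2 : 0 ≤ x2) (hx2' : x2 ≤ 1/2)
    (hx3 : 0 ≤ x3) (hx3' : x3 ≤ 1/2)
    (he1 : x1*(1-x1) ≤ y1^2) (he2 : x2*(1-x2) ≤ y2^2) (he3 : x3*(1-x3) ≤ y3^2)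
    (hb1 : x1^2 + y1^2 ≤ 1) (hb2 : x2^2 + y2^2 ≤ 1) (hb3 : x3^2 + y3^2 ≤ 1)
    (hp12 : (x1+x2-1)^2 + (y1+y2)^2 ≤ 1)
    (hp13 : (x1+x3-1)^2 + (y1+y3)^2 ≤ 1)
    (hp23 : (x2+x3-1)^2 + (y2+y3)^2 ≤ 1)
    (htr : (x1+x2+x3-2)^2 + (y1+y2+y3)^2 ≤ 1) :
    y1^2+y2^2+y3^2 ≤ 3/2 := by
  have ht : 1 ≤ x1+x2+x3 := by
    linarith [htr, sq_nonneg (y1+y2+y3), sq_nonneg (x1+x2+x3-1)]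
  rcases le_or_gt 0 y1 with h1 | h1 <;> rcases le_or_gt 0 y2 with h2 | h2 <;>
    rcases le_or_gt 0 y3 with h3 | h3
  · exact stmt8_core x1 y1 x2 y2 x3 y3 hx1 hx1' hx2 hx2' hx3 hx3' he1 he2 hb3 hp12 (by linarith) h1 h2
  · exact stmt8_core x1 y1 x2 y2 x3 y3 hx1 hx1' hx2 hx2' hx3 hx3' he1 he2 hb3 hp12 (by linarith) h1 h2
  · have := stmt8_core x1 y1 x3 y3 x2 y2 hx1 hx1' hx3 hx3' hx2 hx2' he1 he3 hb2 hp13 (by linarith) h1 h3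
    linarith
  · have := stmt8_core x2 (-y2) x3 (-y3) x1 y1 hx2 hx2' hx3 hx3' hx1 hx1'
      (by linarith [he2]) (by linarith [he3]) hb1 (by linarith [hp23]) (by linarith) (by linarith) (by linarith)
    linarith
  · have := stmt8_core x2 y2 x3 y3 x1 y1 hx2 hx2' hx3 hx3' hx1 hx1' he2 he3 hb1 hp23 (by linarith) h2 h3
    linarith
  · have := stmt8_core x1 (-y1) x3 (-y3) x2 y2 hx1 hx1' hx3 hx3' hx2 hx2'
      (by linarith [he1]) (by linarith [he3]) hb2 (by linarith [hp13]) (by linarith) (by linarith) (by linarith)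
    linarith
  · have := stmt8_core x1 (-y1) x2 (-y2) x3 y3 hx1 hx1' hx2 hx2' hx3 hx3'
      (by linarith [he1]) (by linarith [he2]) hb3 (by linarith [hp12]) (by linarith) (by linarith) (by linarith)
    linarith
  · have := stmt8_core x1 (-y1) x2 (-y2) x3 y3 hx1 hx1' hx2 hx2' hx3 hx3'
      (by linarith [he1]) (by linarith [he2]) hb3 (by linarith [hp12]) (by linarith) (by linarith) (by linarith)
    linarith

lemma stmt8_key1 (a b a' b' : ℝ)
    (h' : (1-a')^2 + b'^2 ≤ 1)
    (hre : a*a' - b*b' = 1) (him : a*b' + b*a' = 0) : 1/2 ≤ a := by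
  have hna : (a*a+b*b)*a' = a := by linear_combination a*hre + b*him
  have hnn : (a*a+b*b)*(a'*a'+b'*b') = 1 := by
    linear_combination (a*a' - b*b' + 1)*hre + (a*b' + b*a')*him
  have hn : (0:ℝ) ≤ a*a+b*b := by nlinarith [mul_self_nonneg a, mul_self_nonneg b]
  have h'2 : a'*a' + b'*b' ≤ 2*a' := by nlinarith [h']
  nlinarith [mul_le_mul_of_nonneg_left h'2 hn]

lemma stmt8_key2 (a b a' b' : ℝ)
    (hre : a*a' - b*b' = 1) (him : a*b' + b*a' = 0) (ha' : a' ≤ 1) :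
    a ≤ a*a + b*b := by
  have hna : (a*a+b*b)*a' = a := by linear_combination a*hre + b*him
  have hn : (0:ℝ) ≤ a*a+b*b := by nlinarith [mul_self_nonneg a, mul_self_nonneg b]
  nlinarith [mul_le_mul_of_nonneg_left ha' hn]

lemma stmt8_pairBound (X X' Y Y' : ℝ)
    (hX : 0 ≤ X) (hX2 : X ≤ 1/2) (hX' : 0 ≤ X') (hX2' : X' ≤ 1/2)
    (hre : X + X' = X*X' - Y*Y') :
    (3/2)*(X+X') ≤ Y^2 + Y'^2 := by
  nlinarith [sq_nonneg (Y+Y'), mul_nonneg hX (by linarith : (0:ℝ) ≤ 1/2 - X'),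
    mul_nonneg hX' (by linarith : (0:ℝ) ≤ 1/2 - X)]

lemma stmt8_pairRigid (X X' Y Y' : ℝ)
    (hX : 0 ≤ X) (hX2 : X ≤ 1/2) (hX' : 0 ≤ X') (hX2' : X' ≤ 1/2)
    (hre : X + X' = X*X' - Y*Y')
    (him : Y*(1-X') + Y'*(1-X) = 0)
    (heq : Y^2 + Y'^2 = (3/2)*(X+X')) :
    (X = 0 ∧ X' = 0 ∧ Y = 0 ∧ Y' = 0) ∨ (X = 1/2 ∧ X' = 1/2) := by
  have hxx : X*X' ≤ (X+X')/4 := by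
    nlinarith [mul_nonneg hX (by linarith : (0:ℝ) ≤ 1/2 - X'),
      mul_nonneg hX' (by linarith : (0:ℝ) ≤ 1/2 - X)]
  have hyy : -(Y*Y') ≤ (Y^2+Y'^2)/2 := by nlinarith [sq_nonneg (Y+Y')]
  have e1 : X*X' = (X+X')/4 := by linarith
  have e2 : -(Y*Y') = (Y^2+Y'^2)/2 := by linarith
  have hYs : Y' = -Y := by nlinarith [sq_nonneg (Y+Y')]
  subst hYs
  by_cases hY : Y = 0
  · subst hY
    left
    have : X + X' = 0 := by nlinarith
    exact ⟨by linarith, by linarith, rfl, by simp⟩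
  · right
    have hXX' : X = X' := by
      have h0 : Y*(X - X') = 0 := by linear_combination him
      rcases mul_eq_zero.mp h0 with h | h
      · exact absurd h hY
      · linarith
    subst hXX'
    have h01 : X = 0 ∨ X = 1/2 := by
      rcases mul_eq_zero.mp (show X*(4*X-2) = 0 by linarith [e1]) with h | h
      · left; exact h
      · right; linarith
    rcases h01 with h | h
    · exfalso; apply hY; nlinarith [hre, h]
    · exact ⟨h, h⟩

set_option maxHeartbeats 4000000 in
theorem stmt_8 (α : Fin 4 → Fin 4 → ℂ)
    (hmul : ∀ j k : Fin 4, j ≠ k → α j k * α k j = 1)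
    (h1 : ∀ j k : Fin 4, j ≠ k → ‖1 - α j k‖ ≤ 1)
    (h2 : ∀ j k₁ k₂ : Fin 4, j ≠ k₁ → j ≠ k₂ → k₁ ≠ k₂ →
      ‖1 - α j k₁ - α j k₂‖ ≤ 1)
    (h3 : ∀ j k₁ k₂ k₃ : Fin 4, j ≠ k₁ → j ≠ k₂ → j ≠ k₃ → k₁ ≠ k₂ → k₁ ≠ k₃ → k₂ ≠ k₃ →
      ‖1 - α j k₁ - α j k₂ - α j k₃‖ ≤ 1) :
    ∃ j k l m : Fin 4, ({j, k, l, m} : Finset (Fin 4)) = Finset.univ ∧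
      α j l = 1 ∧ α l j = 1 ∧ α k m = 1 ∧ α m k = 1 := by
  -- component form of abs bounds
  have habs : ∀ z : ℂ, ‖z‖ ≤ 1 → z.re^2 + z.im^2 ≤ 1 := by
    intro z hz
    have hs := Complex.sq_norm z
    rw [Complex.normSq_apply] at hs
    nlinarith [norm_nonneg z]
  -- component form of the product relations
  have hmc : ∀ j k : Fin 4, j ≠ k →
      (α j k).re*(α k j).re - (α j k).im*(α k j).im = 1 ∧
      (α j k).re*(α k j).im + (α j k).im*(α k j).re = 0 := by
    intro j k h
    have hm := hmul j k h
    rw [Complex.ext_iff] at hm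
    simp [Complex.mul_re, Complex.mul_im, Complex.one_re, Complex.one_im] at hm
    exact ⟨by linarith [hm.1], by linarith [hm.2]⟩
  have hF2 : ∀ j k : Fin 4, j ≠ k → (1-(α j k).re)^2 + (α j k).im^2 ≤ 1 := by
    intro j k h
    have hh := habs _ (h1 j k h)
    simp only [Complex.sub_re, Complex.sub_im, Complex.one_re, Complex.one_im] at hh
    linarith [hh]
  have hF1 : ∀ j k : Fin 4, j ≠ k → 1/2 ≤ (α j k).re := by
    intro j k h
    exact stmt8_key1 (α j k).re (α j k).im (α k j).re (α k j).im
      (hF2 k j h.symm) (hmc j k h).1 (hmc j k h).2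
  have hrow : ∀ j k1 k2 k3 : Fin 4, j≠k1 → j≠k2 → j≠k3 → k1≠k2 → k1≠k3 → k2≠k3 →
      (1 - (α j k1).re - (α j k2).re - (α j k3).re)^2
        + ((α j k1).im + (α j k2).im + (α j k3).im)^2 ≤ 1 := by
    intro j k1 k2 k3 ha hb hc hd he hf
    have hh := habs _ (h3 j k1 k2 k3 ha hb hc hd he hf)
    simp only [Complex.sub_re, Complex.sub_im, Complex.one_re, Complex.one_im] at hh
    linarith [hh]
  have hReSum : ∀ j k1 k2 k3 : Fin 4, j≠k1 → j≠k2 → j≠k3 → k1≠k2 → k1≠k3 → k2≠k3 →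
      (α j k1).re + (α j k2).re + (α j k3).re ≤ 2 := by
    intro j k1 k2 k3 ha hb hc hd he hf
    have hh := hrow j k1 k2 k3 ha hb hc hd he hf
    linarith [hh, sq_nonneg ((α j k1).re + (α j k2).re + (α j k3).re - 2),
      sq_nonneg ((α j k1).im + (α j k2).im + (α j k3).im)]
  have hothers : ∀ j k : Fin 4, j ≠ k → ∃ l m : Fin 4,
      j≠l ∧ j≠m ∧ k≠l ∧ k≠m ∧ l≠m := by decide
  have hF4 : ∀ j k : Fin 4, j ≠ k → (α j k).re ≤ 1 := by
    intro j k h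
    obtain ⟨l, m, hl, hm, hkl, hkm, hlm⟩ := hothers j k h
    have := hReSum j k l m h hl hm hkl hkm hlm
    linarith [hF1 j l hl, hF1 j m hm]
  have hF3 : ∀ j k : Fin 4, j ≠ k →
      (α j k).re ≤ (α j k).re*(α j k).re + (α j k).im*(α j k).im := by
    intro j k h
    exact stmt8_key2 (α j k).re (α j k).im (α k j).re (α k j).im
      (hmc j k h).1 (hmc j k h).2 (hF4 k j h.symm)
  -- pair inequality instances
  have hpb : ∀ j k : Fin 4, j ≠ k →
      (3/2)*((1-(α j k).re) + (1-(α k j).re)) ≤ (α j k).im^2 + (α k j).im^2 := by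
    intro j k h
    apply stmt8_pairBound
    · linarith [hF4 j k h]
    · linarith [hF1 j k h]
    · linarith [hF4 k j h.symm]
    · linarith [hF1 k j h.symm]
    · linear_combination -(hmc j k h).1
  -- row Y bound instances
  have hry : ∀ j k1 k2 k3 : Fin 4, j≠k1 → j≠k2 → j≠k3 → k1≠k2 → k1≠k3 → k2≠k3 →
      (α j k1).im^2 + (α j k2).im^2 + (α j k3).im^2 ≤ 3/2 := by
    intro j k1 k2 k3 ha hb hc hd he hf
    have p12 := habs _ (h2 j k1 k2 ha hb hd)
    have p13 := habs _ (h2 j k1 k3 ha hc he)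
    have p23 := habs _ (h2 j k2 k3 hb hc hf)
    simp only [Complex.sub_re, Complex.sub_im, Complex.one_re, Complex.one_im] at p12 p13 p23
    apply stmt8_rowY (1-(α j k1).re) ((α j k1).im) (1-(α j k2).re) ((α j k2).im)
      (1-(α j k3).re) ((α j k3).im)
    · linarith [hF4 j k1 ha]
    · linarith [hF1 j k1 ha]
    · linarith [hF4 j k2 hb]
    · linarith [hF1 j k2 hb]
    · linarith [hF4 j k3 hc]
    · linarith [hF1 j k3 hc]
    · linarith [hF3 j k1 ha]
    · linarith [hF3 j k2 hb]
    · linarith [hF3 j k3 hc]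
    · exact hF2 j k1 ha
    · exact hF2 j k2 hb
    · exact hF2 j k3 hc
    · linarith [p12]
    · linarith [p13]
    · linarith [p23]
    · linarith [hrow j k1 k2 k3 ha hb hc hd he hf]
  -- row X lower bounds
  have hrx : ∀ j k1 k2 k3 : Fin 4, j≠k1 → j≠k2 → j≠k3 → k1≠k2 → k1≠k3 → k2≠k3 →
      1 ≤ (1-(α j k1).re) + (1-(α j k2).re) + (1-(α j k3).re) := by
    intro j k1 k2 k3 ha hb hc hd he hf
    linarith [hReSum j k1 k2 k3 ha hb hc hd he hf]
  -- instantiate everything explicitly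
  have PB01 := hpb 0 1 (by decide); have PB02 := hpb 0 2 (by decide)
  have PB03 := hpb 0 3 (by decide); have PB12 := hpb 1 2 (by decide)
  have PB13 := hpb 1 3 (by decide); have PB23 := hpb 2 3 (by decide)
  have RY0 := hry 0 1 2 3 (by decide) (by decide) (by decide) (by decide) (by decide) (by decide)
  have RY1 := hry 1 0 2 3 (by decide) (by decide) (by decide) (by decide) (by decide) (by decide)
  have RY2 := hry 2 0 1 3 (by decide) (by decide) (by decide) (by decide) (by decide) (by decide)
  have RY3 := hry 3 0 1 2 (by decide) (by decide) (by decide) (by decide) (by decide) (by decide)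
  have RX0 := hrx 0 1 2 3 (by decide) (by decide) (by decide) (by decide) (by decide) (by decide)
  have RX1 := hrx 1 0 2 3 (by decide) (by decide) (by decide) (by decide) (by decide) (by decide)
  have RX2 := hrx 2 0 1 3 (by decide) (by decide) (by decide) (by decide) (by decide) (by decide)
  have RX3 := hrx 3 0 1 2 (by decide) (by decide) (by decide) (by decide) (by decide) (by decide)
  -- equalities from the saturated global chain
  have E01 : (α 0 1).im^2 + (α 1 0).im^2 = (3/2)*((1-(α 0 1).re) + (1-(α 1 0).re)) := by
    linarith [PB01, PB02, PB03, PB12, PB13, PB23, RY0, RY1, RY2, RY3, RX0, RX1, RX2, RX3]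
  have E02 : (α 0 2).im^2 + (α 2 0).im^2 = (3/2)*((1-(α 0 2).re) + (1-(α 2 0).re)) := by
    linarith [PB01, PB02, PB03, PB12, PB13, PB23, RY0, RY1, RY2, RY3, RX0, RX1, RX2, RX3]
  have E03 : (α 0 3).im^2 + (α 3 0).im^2 = (3/2)*((1-(α 0 3).re) + (1-(α 3 0).re)) := by
    linarith [PB01, PB02, PB03, PB12, PB13, PB23, RY0, RY1, RY2, RY3, RX0, RX1, RX2, RX3]
  have E12 : (α 1 2).im^2 + (α 2 1).im^2 = (3/2)*((1-(α 1 2).re) + (1-(α 2 1).re)) := by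
    linarith [PB01, PB02, PB03, PB12, PB13, PB23, RY0, RY1, RY2, RY3, RX0, RX1, RX2, RX3]
  have E13 : (α 1 3).im^2 + (α 3 1).im^2 = (3/2)*((1-(α 1 3).re) + (1-(α 3 1).re)) := by
    linarith [PB01, PB02, PB03, PB12, PB13, PB23, RY0, RY1, RY2, RY3, RX0, RX1, RX2, RX3]
  have E23 : (α 2 3).im^2 + (α 3 2).im^2 = (3/2)*((1-(α 2 3).re) + (1-(α 3 2).re)) := by
    linarith [PB01, PB02, PB03, PB12, PB13, PB23, RY0, RY1, RY2, RY3, RX0, RX1, RX2, RX3]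
  have RXE0 : (1-(α 0 1).re) + (1-(α 0 2).re) + (1-(α 0 3).re) = 1 := by
    linarith [PB01, PB02, PB03, PB12, PB13, PB23, RY0, RY1, RY2, RY3, RX0, RX1, RX2, RX3]
  have RXE1 : (1-(α 1 0).re) + (1-(α 1 2).re) + (1-(α 1 3).re) = 1 := by
    linarith [PB01, PB02, PB03, PB12, PB13, PB23, RY0, RY1, RY2, RY3, RX0, RX1, RX2, RX3]
  have RXE2 : (1-(α 2 0).re) + (1-(α 2 1).re) + (1-(α 2 3).re) = 1 := by
    linarith [PB01, PB02, PB03, PB12, PB13, PB23, RY0, RY1, RY2, RY3, RX0, RX1, RX2, RX3]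
  have RXE3 : (1-(α 3 0).re) + (1-(α 3 1).re) + (1-(α 3 2).re) = 1 := by
    linarith [PB01, PB02, PB03, PB12, PB13, PB23, RY0, RY1, RY2, RY3, RX0, RX1, RX2, RX3]
  -- rigidity of each pair
  have hD : ∀ j k : Fin 4, j ≠ k →
      (α j k).im^2 + (α k j).im^2 = (3/2)*((1-(α j k).re) + (1-(α k j).re)) →
      ((1-(α j k).re) = 0 ∧ (1-(α k j).re) = 0 ∧ (α j k).im = 0 ∧ (α k j).im = 0) ∨
      ((1-(α j k).re) = 1/2 ∧ (1-(α k j).re) = 1/2) := by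
    intro j k h hE
    apply stmt8_pairRigid
    · linarith [hF4 j k h]
    · linarith [hF1 j k h]
    · linarith [hF4 k j h.symm]
    · linarith [hF1 k j h.symm]
    · linear_combination -(hmc j k h).1
    · linear_combination (hmc j k h).2
    · exact hE
  have D01 := hD 0 1 (by decide) E01
  have D02 := hD 0 2 (by decide) E02
  have D03 := hD 0 3 (by decide) E03
  have D12 := hD 1 2 (by decide) E12
  have D13 := hD 1 3 (by decide) E13
  have D23 := hD 2 3 (by decide) E23
  have mk1 : ∀ j k : Fin 4, 1 - (α j k).re = 0 → (α j k).im = 0 → α j k = 1 := by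
    intro j k hx hy
    apply Complex.ext
    · rw [Complex.one_re]; linarith
    · rw [Complex.one_im]; exact hy
  rcases D01 with L01 | R01
  · -- pair {0,1} is good; show {2,3} good
    rcases D02 with L02 | R02
    · exfalso; linarith [L02.1, L01.1, RXE0, hF1 0 3 (by decide)]
    rcases D12 with L12 | R12
    · exfalso; linarith [L12.1, L01.2.1, RXE1, hF1 1 3 (by decide)]
    rcases D23 with L23 | R23
    · exact ⟨0, 2, 1, 3, by decide, mk1 _ _ L01.1 L01.2.2.1, mk1 _ _ L01.2.1 L01.2.2.2,
        mk1 _ _ L23.1 L23.2.2.1, mk1 _ _ L23.2.1 L23.2.2.2⟩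
    · exfalso; linarith [R02.2, R12.2, R23.1, RXE2]
  · -- pair {0,1} not good
    rcases D02 with L02 | R02
    · -- {0,2} good; show {1,3} good
      rcases D13 with L13 | R13
      · exact ⟨0, 1, 2, 3, by decide, mk1 _ _ L02.1 L02.2.2.1, mk1 _ _ L02.2.1 L02.2.2.2,
          mk1 _ _ L13.1 L13.2.2.1, mk1 _ _ L13.2.1 L13.2.2.2⟩
      · exfalso
        rcases D12 with L12 | R12
        · linarith [L12.2.1, L02.2.1, RXE2, hF1 2 3 (by decide)]
        · linarith [R12.1, R13.1, R01.2, RXE1]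
    · -- X02 = 1/2, so {0,3} good
      rcases D03 with L03 | R03
      · -- {0,3} good; show {1,2} good
        rcases D12 with L12 | R12
        · exact ⟨0, 1, 3, 2, by decide, mk1 _ _ L03.1 L03.2.2.1, mk1 _ _ L03.2.1 L03.2.2.2,
            mk1 _ _ L12.1 L12.2.2.1, mk1 _ _ L12.2.1 L12.2.2.2⟩
        · exfalso
          rcases D13 with L13 | R13
          · linarith [L13.2.1, L03.2.1, RXE3, hF1 3 2 (by decide)]
          · linarith [R12.1, R13.1, R01.2, RXE1]
      · exfalso; linarith [R01.1, R02.1, R03.1, RXE0]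
end

section
/- Let a₁, a₂, a₃, a₄ be vectors in ℝ⁴ such that ‖∑_{p=1}^{4} ε_p a_p‖ ≤ 1 for every choice of signs ε_p ∈ {+1, -1}. Then ∑_{p=1}^{4} ‖a_p‖ ≤ 2. -/
set_option maxHeartbeats 1000000


theorem stmt_9 (a : Fin 4 → EuclideanSpace ℝ (Fin 4))
    (h : ∀ ε : Fin 4 → ℝ, (∀ p, ε p = 1 ∨ ε p = -1) → ‖∑ p, ε p • a p‖ ≤ 1) :
    ∑ p, ‖a p‖ ≤ 2 := by
  set x := a 0
  set y := a 1
  set z := a 2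
  set w := a 3
  have key : ∀ (s t u v : ℝ), (s = 1 ∨ s = -1) → (t = 1 ∨ t = -1) →
      (u = 1 ∨ u = -1) → (v = 1 ∨ v = -1) → ‖s • x + t • y + u • z + v • w‖ ≤ 1 := by
    intro s t u v hs ht hu hv
    have := h ![s, t, u, v] (by
      intro p
      fin_cases p <;> simpa using ‹_›)
    simpa [Fin.sum_univ_four, add_assoc] using this
  have h1 : ‖(x + y) + (z + w)‖ ≤ 1 := by
    have := key 1 1 1 1 (Or.inl rfl) (Or.inl rfl) (Or.inl rfl) (Or.inl rfl)
    simpa [add_assoc] using this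
  have h2 : ‖(x + y) - (z + w)‖ ≤ 1 := by
    have := key 1 1 (-1) (-1) (Or.inl rfl) (Or.inl rfl) (Or.inr rfl) (Or.inr rfl)
    simp only [one_smul, neg_smul] at this
    calc ‖(x + y) - (z + w)‖ = ‖x + y + -z + -w‖ := by rw [show (x+y) - (z+w) = x + y + -z + -w by abel]
    _ ≤ 1 := this
  have h3 : ‖(x + y) + (z - w)‖ ≤ 1 := by
    have := key 1 1 1 (-1) (Or.inl rfl) (Or.inl rfl) (Or.inl rfl) (Or.inr rfl)
    simp only [one_smul, neg_smul] at this
    calc ‖(x + y) + (z - w)‖ = ‖x + y + z + -w‖ := by rw [show (x+y) + (z-w) = x + y + z + -w by abel]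
    _ ≤ 1 := this
  have h4 : ‖(x + y) - (z - w)‖ ≤ 1 := by
    have := key 1 1 (-1) 1 (Or.inl rfl) (Or.inl rfl) (Or.inr rfl) (Or.inl rfl)
    simp only [one_smul, neg_smul] at this
    calc ‖(x + y) - (z - w)‖ = ‖x + y + -z + w‖ := by rw [show (x+y) - (z-w) = x + y + -z + w by abel]
    _ ≤ 1 := this
  have h5 : ‖(x - y) + (z + w)‖ ≤ 1 := by
    have := key 1 (-1) 1 1 (Or.inl rfl) (Or.inr rfl) (Or.inl rfl) (Or.inl rfl)
    simp only [one_smul, neg_smul] at this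
    calc ‖(x - y) + (z + w)‖ = ‖x + -y + z + w‖ := by rw [show (x-y) + (z+w) = x + -y + z + w by abel]
    _ ≤ 1 := this
  have h6 : ‖(x - y) - (z + w)‖ ≤ 1 := by
    have := key 1 (-1) (-1) (-1) (Or.inl rfl) (Or.inr rfl) (Or.inr rfl) (Or.inr rfl)
    simp only [one_smul, neg_smul] at this
    calc ‖(x - y) - (z + w)‖ = ‖x + -y + -z + -w‖ := by rw [show (x-y) - (z+w) = x + -y + -z + -w by abel]
    _ ≤ 1 := this
  have h7 : ‖(x - y) + (z - w)‖ ≤ 1 := by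
    have := key 1 (-1) 1 (-1) (Or.inl rfl) (Or.inr rfl) (Or.inl rfl) (Or.inr rfl)
    simp only [one_smul, neg_smul] at this
    calc ‖(x - y) + (z - w)‖ = ‖x + -y + z + -w‖ := by rw [show (x-y) + (z-w) = x + -y + z + -w by abel]
    _ ≤ 1 := this
  have h8 : ‖(x - y) - (z - w)‖ ≤ 1 := by
    have := key 1 (-1) (-1) 1 (Or.inl rfl) (Or.inr rfl) (Or.inr rfl) (Or.inl rfl)
    simp only [one_smul, neg_smul] at this
    calc ‖(x - y) - (z - w)‖ = ‖x + -y + -z + w‖ := by rw [show (x-y) - (z-w) = x + -y + -z + w by abel]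
    _ ≤ 1 := this
  -- parallelogram laws
  have p1 := parallelogram_law_with_norm ℝ (x + y) (z + w)
  have p2 := parallelogram_law_with_norm ℝ (x + y) (z - w)
  have p3 := parallelogram_law_with_norm ℝ (x - y) (z + w)
  have p4 := parallelogram_law_with_norm ℝ (x - y) (z - w)
  have p5 := parallelogram_law_with_norm ℝ x y
  have p6 := parallelogram_law_with_norm ℝ z w
  have n1 : (0:ℝ) ≤ ‖(x + y) + (z + w)‖ := norm_nonneg _
  have n2 : (0:ℝ) ≤ ‖(x + y) - (z + w)‖ := norm_nonneg _
  have n3 : (0:ℝ) ≤ ‖(x + y) + (z - w)‖ := norm_nonneg _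
  have n4 : (0:ℝ) ≤ ‖(x + y) - (z - w)‖ := norm_nonneg _
  have n5 : (0:ℝ) ≤ ‖(x - y) + (z + w)‖ := norm_nonneg _
  have n6 : (0:ℝ) ≤ ‖(x - y) - (z + w)‖ := norm_nonneg _
  have n7 : (0:ℝ) ≤ ‖(x - y) + (z - w)‖ := norm_nonneg _
  have n8 : (0:ℝ) ≤ ‖(x - y) - (z - w)‖ := norm_nonneg _
  have sq1 : ‖(x + y) + (z + w)‖ * ‖(x + y) + (z + w)‖ ≤ 1 := mul_le_one₀ h1 n1 h1
  have sq2 : ‖(x + y) - (z + w)‖ * ‖(x + y) - (z + w)‖ ≤ 1 := mul_le_one₀ h2 n2 h2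
  have sq3 : ‖(x + y) + (z - w)‖ * ‖(x + y) + (z - w)‖ ≤ 1 := mul_le_one₀ h3 n3 h3
  have sq4 : ‖(x + y) - (z - w)‖ * ‖(x + y) - (z - w)‖ ≤ 1 := mul_le_one₀ h4 n4 h4
  have sq5 : ‖(x - y) + (z + w)‖ * ‖(x - y) + (z + w)‖ ≤ 1 := mul_le_one₀ h5 n5 h5
  have sq6 : ‖(x - y) - (z + w)‖ * ‖(x - y) - (z + w)‖ ≤ 1 := mul_le_one₀ h6 n6 h6
  have sq7 : ‖(x - y) + (z - w)‖ * ‖(x - y) + (z - w)‖ ≤ 1 := mul_le_one₀ h7 n7 h7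
  have sq8 : ‖(x - y) - (z - w)‖ * ‖(x - y) - (z - w)‖ ≤ 1 := mul_le_one₀ h8 n8 h8
  have sumsq : ‖x‖ * ‖x‖ + ‖y‖ * ‖y‖ + ‖z‖ * ‖z‖ + ‖w‖ * ‖w‖ ≤ 1 := by linarith
  have nx : (0:ℝ) ≤ ‖x‖ := norm_nonneg _
  have ny : (0:ℝ) ≤ ‖y‖ := norm_nonneg _
  have nz : (0:ℝ) ≤ ‖z‖ := norm_nonneg _
  have nw : (0:ℝ) ≤ ‖w‖ := norm_nonneg _
  rw [Fin.sum_univ_four]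
  nlinarith [sq_nonneg (‖x‖ - ‖y‖), sq_nonneg (‖x‖ - ‖z‖), sq_nonneg (‖x‖ - ‖w‖),
    sq_nonneg (‖y‖ - ‖z‖), sq_nonneg (‖y‖ - ‖w‖), sq_nonneg (‖z‖ - ‖w‖),
    sq_nonneg (‖x‖ + ‖y‖ + ‖z‖ + ‖w‖ - 2)]
end

section
/- Let a₁, a₂, a₃, a₄ be vectors in ℝ⁴ such that ‖∑_{p=1}^{4} ε_p a_p‖ ≤ 1 for all sign choices ε ∈ {±1}⁴, and suppose ∑_{p=1}^{4} ‖a_p‖ = 2. Then the a_p are pairwise orthogonal and each has norm 1/2. -/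
set_option maxHeartbeats 1000000

theorem aux_norms (n0 n1 n2 n3 : ℝ) (hs : n0 + n1 + n2 + n3 = 2)
    (hle : n0 ^ 2 + n1 ^ 2 + n2 ^ 2 + n3 ^ 2 ≤ 1) :
    n0 = 1 / 2 ∧ n1 = 1 / 2 ∧ n2 = 1 / 2 ∧ n3 = 1 / 2 ∧
      n0 ^ 2 + n1 ^ 2 + n2 ^ 2 + n3 ^ 2 = 1 := by
  have hid : (n0 - n1) ^ 2 + (n0 - n2) ^ 2 + (n0 - n3) ^ 2 + (n1 - n2) ^ 2 +
      (n1 - n3) ^ 2 + (n2 - n3) ^ 2 =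
      4 * (n0 ^ 2 + n1 ^ 2 + n2 ^ 2 + n3 ^ 2) - (n0 + n1 + n2 + n3) ^ 2 := by ring
  have h4 : (n0 + n1 + n2 + n3) ^ 2 = 4 := by rw [hs]; norm_num
  have hge : 1 ≤ n0 ^ 2 + n1 ^ 2 + n2 ^ 2 + n3 ^ 2 := by
    have q1 := sq_nonneg (n0 - n1); have q2 := sq_nonneg (n0 - n2)
    have q3 := sq_nonneg (n0 - n3); have q4 := sq_nonneg (n1 - n2)
    have q5 := sq_nonneg (n1 - n3); have q6 := sq_nonneg (n2 - n3)
    linarith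
  have hN : n0 ^ 2 + n1 ^ 2 + n2 ^ 2 + n3 ^ 2 = 1 := le_antisymm hle hge
  have hz : (n0 - 1/2) ^ 2 + (n1 - 1/2) ^ 2 + (n2 - 1/2) ^ 2 + (n3 - 1/2) ^ 2 = 0 := by
    linear_combination hN - hs
  have q0 := sq_nonneg (n0 - 1/2); have q1 := sq_nonneg (n1 - 1/2)
  have q2 := sq_nonneg (n2 - 1/2); have q3 := sq_nonneg (n3 - 1/2)
  have z0 : (n0 - 1/2) ^ 2 = 0 := by linarith
  have z1 : (n1 - 1/2) ^ 2 = 0 := by linarith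
  have z2 : (n2 - 1/2) ^ 2 = 0 := by linarith
  have z3 : (n3 - 1/2) ^ 2 = 0 := by linarith
  refine ⟨?_, ?_, ?_, ?_, hN⟩ <;>
    [skip; skip; skip; skip] <;>
    first
    | (have := pow_eq_zero_iff (two_ne_zero) |>.mp z0; linarith)
    | (have := pow_eq_zero_iff (two_ne_zero) |>.mp z1; linarith)
    | (have := pow_eq_zero_iff (two_ne_zero) |>.mp z2; linarith)
    | (have := pow_eq_zero_iff (two_ne_zero) |>.mp z3; linarith)

theorem aux (n0 n1 n2 n3 c01 c02 c03 c12 c13 c23 : ℝ)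
    (heq : n0 + n1 + n2 + n3 = 2)
    (K : ∀ e0 e1 e2 e3 : ℝ, (e0 = 1 ∨ e0 = -1) → (e1 = 1 ∨ e1 = -1) →
      (e2 = 1 ∨ e2 = -1) → (e3 = 1 ∨ e3 = -1) →
      n0 ^ 2 + n1 ^ 2 + n2 ^ 2 + n3 ^ 2 +
        2 * (e0 * e1 * c01 + e0 * e2 * c02 + e0 * e3 * c03 +
          e1 * e2 * c12 + e1 * e3 * c13 + e2 * e3 * c23) ≤ 1) :
    n0 = 1 / 2 ∧ n1 = 1 / 2 ∧ n2 = 1 / 2 ∧ n3 = 1 / 2 ∧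
      c01 = 0 ∧ c02 = 0 ∧ c03 = 0 ∧ c12 = 0 ∧ c13 = 0 ∧ c23 = 0 := by
  have K1 := K 1 1 1 1 (Or.inl rfl) (Or.inl rfl) (Or.inl rfl) (Or.inl rfl)
  have K2 := K 1 1 1 (-1) (Or.inl rfl) (Or.inl rfl) (Or.inl rfl) (Or.inr rfl)
  have K3 := K 1 1 (-1) 1 (Or.inl rfl) (Or.inl rfl) (Or.inr rfl) (Or.inl rfl)
  have K4 := K 1 1 (-1) (-1) (Or.inl rfl) (Or.inl rfl) (Or.inr rfl) (Or.inr rfl)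
  have K5 := K 1 (-1) 1 1 (Or.inl rfl) (Or.inr rfl) (Or.inl rfl) (Or.inl rfl)
  have K6 := K 1 (-1) 1 (-1) (Or.inl rfl) (Or.inr rfl) (Or.inl rfl) (Or.inr rfl)
  have K7 := K 1 (-1) (-1) 1 (Or.inl rfl) (Or.inr rfl) (Or.inr rfl) (Or.inl rfl)
  have K8 := K 1 (-1) (-1) (-1) (Or.inl rfl) (Or.inr rfl) (Or.inr rfl) (Or.inr rfl)
  clear K
  ring_nf at K1 K2 K3 K4 K5 K6 K7 K8
  have hle : n0 ^ 2 + n1 ^ 2 + n2 ^ 2 + n3 ^ 2 ≤ 1 := by linarith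
  obtain ⟨w0, w1, w2, w3, hN⟩ := aux_norms n0 n1 n2 n3 heq hle
  refine ⟨w0, w1, w2, w3, ?_, ?_, ?_, ?_, ?_, ?_⟩ <;> linarith

theorem stmt_10 (a : Fin 4 → EuclideanSpace ℝ (Fin 4))
    (h : ∀ ε : Fin 4 → ℝ, (∀ p, ε p = 1 ∨ ε p = -1) → ‖∑ p, ε p • a p‖ ≤ 1)
    (heq : ∑ p, ‖a p‖ = 2) :
    (∀ p, ‖a p‖ = 1 / 2) ∧
      ∀ p q, p ≠ q → inner ℝ (a p) (a q) = (0 : ℝ) := by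
  have key : ∀ ε : Fin 4 → ℝ, (∀ p, ε p = 1 ∨ ε p = -1) →
      (∑ p, ∑ q, ε p * ε q * (inner ℝ (a p) (a q) : ℝ)) ≤ 1 := by
    intro ε hε
    have h1 := h ε hε
    have h2 : ‖∑ p, ε p • a p‖ ^ 2 ≤ 1 := by
      nlinarith [norm_nonneg (∑ p, ε p • a p)]
    calc (∑ p, ∑ q, ε p * ε q * (inner ℝ (a p) (a q) : ℝ))
        = (inner ℝ (∑ p, ε p • a p) (∑ q, ε q • a q) : ℝ) := by
          rw [sum_inner]
          refine Finset.sum_congr rfl fun p _ => ?_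
          rw [inner_sum]
          refine Finset.sum_congr rfl fun q _ => ?_
          rw [real_inner_smul_left, real_inner_smul_right]; ring
      _ = ‖∑ p, ε p • a p‖ ^ 2 := real_inner_self_eq_norm_sq _
      _ ≤ 1 := h2
  have c10 : (inner ℝ (a 1) (a 0) : ℝ) = inner ℝ (a 0) (a 1) := real_inner_comm _ _
  have c20 : (inner ℝ (a 2) (a 0) : ℝ) = inner ℝ (a 0) (a 2) := real_inner_comm _ _
  have c30 : (inner ℝ (a 3) (a 0) : ℝ) = inner ℝ (a 0) (a 3) := real_inner_comm _ _
  have c21 : (inner ℝ (a 2) (a 1) : ℝ) = inner ℝ (a 1) (a 2) := real_inner_comm _ _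
  have c31 : (inner ℝ (a 3) (a 1) : ℝ) = inner ℝ (a 1) (a 3) := real_inner_comm _ _
  have c32 : (inner ℝ (a 3) (a 2) : ℝ) = inner ℝ (a 2) (a 3) := real_inner_comm _ _
  have s0 : (inner ℝ (a 0) (a 0) : ℝ) = ‖a 0‖ ^ 2 := real_inner_self_eq_norm_sq _
  have s1 : (inner ℝ (a 1) (a 1) : ℝ) = ‖a 1‖ ^ 2 := real_inner_self_eq_norm_sq _
  have s2 : (inner ℝ (a 2) (a 2) : ℝ) = ‖a 2‖ ^ 2 := real_inner_self_eq_norm_sq _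
  have s3 : (inner ℝ (a 3) (a 3) : ℝ) = ‖a 3‖ ^ 2 := real_inner_self_eq_norm_sq _
  have K : ∀ e0 e1 e2 e3 : ℝ, (e0 = 1 ∨ e0 = -1) → (e1 = 1 ∨ e1 = -1) →
      (e2 = 1 ∨ e2 = -1) → (e3 = 1 ∨ e3 = -1) →
      ‖a 0‖ ^ 2 + ‖a 1‖ ^ 2 + ‖a 2‖ ^ 2 + ‖a 3‖ ^ 2 +
        2 * (e0 * e1 * (inner ℝ (a 0) (a 1) : ℝ) + e0 * e2 * (inner ℝ (a 0) (a 2) : ℝ) +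
          e0 * e3 * (inner ℝ (a 0) (a 3) : ℝ) + e1 * e2 * (inner ℝ (a 1) (a 2) : ℝ) +
          e1 * e3 * (inner ℝ (a 1) (a 3) : ℝ) + e2 * e3 * (inner ℝ (a 2) (a 3) : ℝ)) ≤ 1 := by
    intro e0 e1 e2 e3 h0 h1 h2 h3
    have hk := key ![e0, e1, e2, e3] (by intro p; fin_cases p <;> simpa)
    simp only [Fin.sum_univ_four, Matrix.cons_val_zero, Matrix.cons_val_one, Matrix.head_cons,
      Matrix.cons_val_two, Matrix.tail_cons, Matrix.cons_val_three, c10, c20, c30, c21, c31, c32,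
      s0, s1, s2, s3] at hk
    have he0 : e0 * e0 = 1 := by rcases h0 with rfl | rfl <;> norm_num
    have he1 : e1 * e1 = 1 := by rcases h1 with rfl | rfl <;> norm_num
    have he2 : e2 * e2 = 1 := by rcases h2 with rfl | rfl <;> norm_num
    have he3 : e3 * e3 = 1 := by rcases h3 with rfl | rfl <;> norm_num
    refine le_trans (le_of_eq ?_) hk
    linear_combination (-(1:ℝ) * ‖a 0‖ ^ 2) * he0 + (-(1:ℝ) * ‖a 1‖ ^ 2) * he1 +
      (-(1:ℝ) * ‖a 2‖ ^ 2) * he2 + (-(1:ℝ) * ‖a 3‖ ^ 2) * he3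
  rw [Fin.sum_univ_four] at heq
  obtain ⟨w0, w1, w2, w3, o01, o02, o03, o12, o13, o23⟩ :=
    aux ‖a 0‖ ‖a 1‖ ‖a 2‖ ‖a 3‖ _ _ _ _ _ _ heq K
  constructor
  · intro p; fin_cases p <;> assumption
  · intro p q hpq
    fin_cases p <;> fin_cases q <;>
      first
        | exact absurd rfl hpq
        | assumption
        | (rw [real_inner_comm]; assumption)
end

section
/- If a parallelotope P = {∑_{p=1}^{4} λ_p b_p : 0 ≤ λ_p ≤ 1} generated by vectors b₁,...,b₄ ∈ ℝ⁴ is contained in a closed ball of radius 1, then ∑_{p=1}^{4} ‖b_p‖ ≤ 4. -/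
lemma key4 (b : Fin 4 → EuclideanSpace ℝ (Fin 4))
    (x₀ c : EuclideanSpace ℝ (Fin 4))
    (h : ∀ lam : Fin 4 → ℝ, (∀ p, lam p ∈ Set.Icc (0 : ℝ) 1) →
      x₀ + ∑ p, lam p • b p ∈ Metric.closedBall c 1)
    (ε : Fin 4 → ℝ) (hε : ∀ p, ε p = 1 ∨ ε p = -1) :
    ‖∑ p, ε p • b p‖ ≤ 2 := by
  set lam := fun p => (1 + ε p) / 2 with hlam
  set mu := fun p => (1 - ε p) / 2 with hmu
  have h1 := h lam (fun p => by rcases hε p with hp | hp <;> simp [hlam, hp] <;> norm_num)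
  have h2 := h mu (fun p => by rcases hε p with hp | hp <;> simp [hmu, hp] <;> norm_num)
  rw [Metric.mem_closedBall] at h1 h2
  have hd : dist (x₀ + ∑ p, lam p • b p) (x₀ + ∑ p, mu p • b p) ≤ 2 := by
    calc dist (x₀ + ∑ p, lam p • b p) (x₀ + ∑ p, mu p • b p)
        ≤ dist (x₀ + ∑ p, lam p • b p) c + dist c (x₀ + ∑ p, mu p • b p) := dist_triangle _ _ _
      _ ≤ 1 + 1 := by
          have := h2
          rw [dist_comm] at this
          linarith
      _ = 2 := by norm_num
  have heq : (x₀ + ∑ p, lam p • b p) - (x₀ + ∑ p, mu p • b p) = ∑ p, ε p • b p := by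
    rw [add_sub_add_left_eq_sub, ← Finset.sum_sub_distrib]
    refine Finset.sum_congr rfl fun p _ => ?_
    rw [← sub_smul]
    congr 1
    simp [hlam, hmu]
    ring
  calc ‖∑ p, ε p • b p‖ = dist (x₀ + ∑ p, lam p • b p) (x₀ + ∑ p, mu p • b p) := by
        rw [dist_eq_norm, heq]
    _ ≤ 2 := hd

lemma key4' (b : Fin 4 → EuclideanSpace ℝ (Fin 4))
    (x₀ c : EuclideanSpace ℝ (Fin 4))
    (h : ∀ lam : Fin 4 → ℝ, (∀ p, lam p ∈ Set.Icc (0 : ℝ) 1) →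
      x₀ + ∑ p, lam p • b p ∈ Metric.closedBall c 1)
    (s t u : ℝ) (hs : s = 1 ∨ s = -1) (ht : t = 1 ∨ t = -1) (hu : u = 1 ∨ u = -1) :
    ‖b 0 + s • b 1 + t • b 2 + u • b 3‖ ≤ 2 := by
  have := key4 b x₀ c h ![1, s, t, u] (by
    intro p
    fin_cases p <;> simp [hs, ht, hu])
  rw [Fin.sum_univ_four] at this
  simpa using this

set_option maxHeartbeats 1600000 in
theorem stmt_11 (b : Fin 4 → EuclideanSpace ℝ (Fin 4))
    (x₀ c : EuclideanSpace ℝ (Fin 4))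
    (h : ∀ lam : Fin 4 → ℝ, (∀ p, lam p ∈ Set.Icc (0 : ℝ) 1) →
      x₀ + ∑ p, lam p • b p ∈ Metric.closedBall c 1) :
    ∑ p, ‖b p‖ ≤ 4 := by
  have K : ∀ s t u : ℝ, s = 1 ∨ s = -1 → t = 1 ∨ t = -1 → u = 1 ∨ u = -1 →
      ‖b 0 + s • b 1 + t • b 2 + u • b 3‖ ≤ 2 := fun s t u hs ht hu => key4' b x₀ c h s t u hs ht hu
  have n1 : ‖b 0 + b 1 + b 2 + b 3‖ ≤ 2 := by
    have := K 1 1 1 (Or.inl rfl) (Or.inl rfl) (Or.inl rfl); simpa using this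
  have n2 : ‖b 0 + b 1 + b 2 - b 3‖ ≤ 2 := by
    have := K 1 1 (-1) (Or.inl rfl) (Or.inl rfl) (Or.inr rfl)
    simpa [neg_one_smul, ← sub_eq_add_neg] using this
  have n3 : ‖b 0 + b 1 - b 2 + b 3‖ ≤ 2 := by
    have := K 1 (-1) 1 (Or.inl rfl) (Or.inr rfl) (Or.inl rfl)
    simpa [neg_one_smul, ← sub_eq_add_neg] using this
  have n4 : ‖b 0 + b 1 - b 2 - b 3‖ ≤ 2 := by
    have := K 1 (-1) (-1) (Or.inl rfl) (Or.inr rfl) (Or.inr rfl)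
    simpa [neg_one_smul, ← sub_eq_add_neg] using this
  have n5 : ‖b 0 - b 1 + b 2 + b 3‖ ≤ 2 := by
    have := K (-1) 1 1 (Or.inr rfl) (Or.inl rfl) (Or.inl rfl)
    simpa [neg_one_smul, ← sub_eq_add_neg] using this
  have n6 : ‖b 0 - b 1 + b 2 - b 3‖ ≤ 2 := by
    have := K (-1) 1 (-1) (Or.inr rfl) (Or.inl rfl) (Or.inr rfl)
    simpa [neg_one_smul, ← sub_eq_add_neg] using this
  have n7 : ‖b 0 - b 1 - b 2 + b 3‖ ≤ 2 := by
    have := K (-1) (-1) 1 (Or.inr rfl) (Or.inr rfl) (Or.inl rfl)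
    simpa [neg_one_smul, ← sub_eq_add_neg] using this
  have n8 : ‖b 0 - b 1 - b 2 - b 3‖ ≤ 2 := by
    have := K (-1) (-1) (-1) (Or.inr rfl) (Or.inr rfl) (Or.inr rfl)
    simpa [neg_one_smul, ← sub_eq_add_neg] using this
  have pl : ∀ x y : EuclideanSpace ℝ (Fin 4),
      ‖x + y‖ * ‖x + y‖ + ‖x - y‖ * ‖x - y‖ = 2 * (‖x‖ * ‖x‖ + ‖y‖ * ‖y‖) :=
    fun x y => by simpa only [sq] using parallelogram_law_with_norm ℝ x y
  have e1 := pl (b 0 + b 1 + b 2) (b 3)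
  have e2 := pl (b 0 + b 1 - b 2) (b 3)
  have e3 := pl (b 0 - b 1 + b 2) (b 3)
  have e4 := pl (b 0 - b 1 - b 2) (b 3)
  have f1 := pl (b 0 + b 1) (b 2)
  have f2 := pl (b 0 - b 1) (b 2)
  have g1 := pl (b 0) (b 1)
  -- fix sub/add rearrangements
  have r1 : b 0 + b 1 - b 2 + b 3 = b 0 + b 1 - b 2 + b 3 := rfl
  have m1 := mul_self_le_mul_self (norm_nonneg _) n1
  have m2 := mul_self_le_mul_self (norm_nonneg _) n2
  have m3 := mul_self_le_mul_self (norm_nonneg _) n3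
  have m4 := mul_self_le_mul_self (norm_nonneg _) n4
  have m5 := mul_self_le_mul_self (norm_nonneg _) n5
  have m6 := mul_self_le_mul_self (norm_nonneg _) n6
  have m7 := mul_self_le_mul_self (norm_nonneg _) n7
  have m8 := mul_self_le_mul_self (norm_nonneg _) n8
  have hsq : ‖b 0‖ * ‖b 0‖ + ‖b 1‖ * ‖b 1‖ + ‖b 2‖ * ‖b 2‖ + ‖b 3‖ * ‖b 3‖ ≤ 4 := by
    norm_num at m1 m2 m3 m4 m5 m6 m7 m8
    linarith [m1, m2, m3, m4, m5, m6, m7, m8, e1, e2, e3, e4, f1, f2, g1]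
  rw [Fin.sum_univ_four]
  nlinarith [hsq, norm_nonneg (b 0), norm_nonneg (b 1), norm_nonneg (b 2), norm_nonneg (b 3),
    sq_nonneg (‖b 0‖ - ‖b 1‖), sq_nonneg (‖b 0‖ - ‖b 2‖), sq_nonneg (‖b 0‖ - ‖b 3‖),
    sq_nonneg (‖b 1‖ - ‖b 2‖), sq_nonneg (‖b 1‖ - ‖b 3‖), sq_nonneg (‖b 2‖ - ‖b 3‖),
    sq_nonneg (‖b 0‖ + ‖b 1‖ + ‖b 2‖ + ‖b 3‖ - 4)]
end

section
/- If a parallelotope in ℝ⁴ generated by vectors b₁,...,b₄ (translated arbitrarily) is contained in a closed unit ball and ∑_{p=1}^{4} ‖b_p‖ = 4, then the b_p are pairwise orthogonal unit vectors (i.e., the parallelotope is a unit hypercube inscribed in the ball). -/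
lemma aux_norms_s12 (a0 a1 a2 a3 : ℝ) (h1 : a0 + a1 + a2 + a3 = 4)
    (h2 : a0^2 + a1^2 + a2^2 + a3^2 ≤ 4) :
    a0 = 1 ∧ a1 = 1 ∧ a2 = 1 ∧ a3 = 1 := by
  refine ⟨?_, ?_, ?_, ?_⟩ <;>
    nlinarith [sq_nonneg (a0 - 1), sq_nonneg (a1 - 1), sq_nonneg (a2 - 1), sq_nonneg (a3 - 1)]

set_option maxHeartbeats 2000000 in
theorem stmt_12 (b : Fin 4 → EuclideanSpace ℝ (Fin 4))
    (x₀ c : EuclideanSpace ℝ (Fin 4))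
    (h : ∀ lam : Fin 4 → ℝ, (∀ p, lam p ∈ Set.Icc (0 : ℝ) 1) →
      x₀ + ∑ p, lam p • b p ∈ Metric.closedBall c 1)
    (heq : ∑ p, ‖b p‖ = 4) :
    (∀ p, ‖b p‖ = 1) ∧ ∀ p q, p ≠ q → inner ℝ (b p) (b q) = (0 : ℝ) := by
  have key : ∀ σ : Fin 4 → ℝ, (∀ p, σ p = 1 ∨ σ p = -1) →
      ∑ p, ∑ q, σ p * σ q * (inner ℝ (b p) (b q) : ℝ) ≤ 4 := by
    intro σ hσ
    have h01 : ∀ p, (σ p + 1)/2 ∈ Set.Icc (0:ℝ) 1 := by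
      intro p; rcases hσ p with hh | hh <;> rw [hh] <;> constructor <;> norm_num
    have h01' : ∀ p, (1 - σ p)/2 ∈ Set.Icc (0:ℝ) 1 := by
      intro p; rcases hσ p with hh | hh <;> rw [hh] <;> constructor <;> norm_num
    have h1 := h _ h01
    have h2 := h _ h01'
    have hd : dist (x₀ + ∑ p, ((σ p + 1)/2) • b p) (x₀ + ∑ p, ((1 - σ p)/2) • b p) ≤ 2 := by
      calc dist (x₀ + ∑ p, ((σ p + 1)/2) • b p) (x₀ + ∑ p, ((1 - σ p)/2) • b p)
          ≤ dist (x₀ + ∑ p, ((σ p + 1)/2) • b p) c + dist c (x₀ + ∑ p, ((1 - σ p)/2) • b p) :=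
            dist_triangle _ _ _
        _ ≤ 1 + 1 := add_le_add (Metric.mem_closedBall.mp h1)
            (by rw [dist_comm]; exact Metric.mem_closedBall.mp h2)
        _ = 2 := by norm_num
    have hv : ‖∑ p, σ p • b p‖ ≤ 2 := by
      have heq2 : (x₀ + ∑ p, ((σ p + 1)/2) • b p) - (x₀ + ∑ p, ((1 - σ p)/2) • b p)
          = ∑ p, σ p • b p := by
        rw [add_sub_add_left_eq_sub, ← Finset.sum_sub_distrib]
        refine Finset.sum_congr rfl fun p _ => ?_
        rw [← sub_smul]; ring_nf
      rw [dist_eq_norm, heq2] at hd; exact hd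
    have hsq : ‖∑ p, σ p • b p‖^2 ≤ 4 := by nlinarith [norm_nonneg (∑ p, σ p • b p)]
    calc ∑ p, ∑ q, σ p * σ q * (inner ℝ (b p) (b q) : ℝ)
        = (inner ℝ (∑ p, σ p • b p) (∑ q, σ q • b q) : ℝ) := by
          rw [sum_inner]
          refine Finset.sum_congr rfl fun p _ => ?_
          rw [inner_sum]
          refine Finset.sum_congr rfl fun q _ => ?_
          rw [real_inner_smul_left, real_inner_smul_right]; ring
      _ = ‖∑ p, σ p • b p‖^2 := real_inner_self_eq_norm_sq _
      _ ≤ 4 := hsq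
  have k1 := key ![1,1,1,1] (by intro p; fin_cases p <;> norm_num)
  have k2 := key ![1,1,1,-1] (by intro p; fin_cases p <;> norm_num)
  have k3 := key ![1,1,-1,1] (by intro p; fin_cases p <;> norm_num)
  have k4 := key ![1,1,-1,-1] (by intro p; fin_cases p <;> norm_num)
  have k5 := key ![1,-1,1,1] (by intro p; fin_cases p <;> norm_num)
  have k6 := key ![1,-1,1,-1] (by intro p; fin_cases p <;> norm_num)
  have k7 := key ![1,-1,-1,1] (by intro p; fin_cases p <;> norm_num)
  have k8 := key ![1,-1,-1,-1] (by intro p; fin_cases p <;> norm_num)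
  simp only [Fin.sum_univ_four, Matrix.cons_val_zero, Matrix.cons_val_one, Matrix.head_cons,
    Matrix.cons_val_two, Matrix.tail_cons, Matrix.cons_val_three, one_mul, mul_one, neg_mul,
    mul_neg, neg_neg] at k1 k2 k3 k4 k5 k6 k7 k8
  have hcomm : ∀ p q : Fin 4, (inner ℝ (b p) (b q) : ℝ) = inner ℝ (b q) (b p) :=
    fun p q => real_inner_comm _ _
  have hself : ∀ p : Fin 4, (inner ℝ (b p) (b p) : ℝ) = ‖b p‖^2 :=
    fun p => real_inner_self_eq_norm_sq _
  rw [Fin.sum_univ_four] at heq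
  have hsum : ‖b 0‖^2 + ‖b 1‖^2 + ‖b 2‖^2 + ‖b 3‖^2 ≤ 4 := by
    rw [← hself 0, ← hself 1, ← hself 2, ← hself 3]
    linarith [k1, k2, k3, k4, k5, k6, k7, k8]
  obtain ⟨n0, n1, n2, n3⟩ := aux_norms_s12 _ _ _ _ heq hsum
  have hnorm : ∀ p : Fin 4, ‖b p‖ = 1 := by
    intro p; fin_cases p
    · exact n0
    · exact n1
    · exact n2
    · exact n3
  refine ⟨hnorm, ?_⟩
  have hs : ∀ p : Fin 4, (inner ℝ (b p) (b p) : ℝ) = 1 := by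
    intro p; rw [hself p, hnorm p]; norm_num
  rw [hcomm 1 0, hcomm 2 0, hcomm 3 0, hcomm 2 1, hcomm 3 1, hcomm 3 2,
    hs 0, hs 1, hs 2, hs 3] at k1 k2 k3 k4 k5 k6 k7 k8
  have o01 : (inner ℝ (b 0) (b 1) : ℝ) = 0 := by linarith
  have o02 : (inner ℝ (b 0) (b 2) : ℝ) = 0 := by linarith
  have o03 : (inner ℝ (b 0) (b 3) : ℝ) = 0 := by linarith
  have o12 : (inner ℝ (b 1) (b 2) : ℝ) = 0 := by linarith
  have o13 : (inner ℝ (b 1) (b 3) : ℝ) = 0 := by linarith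
  have o23 : (inner ℝ (b 2) (b 3) : ℝ) = 0 := by linarith
  intro p q hpq
  fin_cases p <;> fin_cases q <;>
    first
      | exact absurd rfl hpq
      | exact o01 | exact o02 | exact o03 | exact o12 | exact o13 | exact o23
      | exact (hcomm 1 0).trans o01
      | exact (hcomm 2 0).trans o02
      | exact (hcomm 3 0).trans o03
      | exact (hcomm 2 1).trans o12
      | exact (hcomm 3 1).trans o13
      | exact (hcomm 3 2).trans o23
end

section
/- Let β₁, β₂, β₃, β₄ be quaternions such that |1 - ∑_{p∈A} β_p| ≤ 1 for every subset A of {1,2,3,4}. Then ∑_{p=1}^{4} |β_p| ≤ 4. -/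
theorem stmt_13 (β : Fin 4 → Quaternion ℝ)
    (h : ∀ A : Finset (Fin 4), ‖1 - ∑ p ∈ A, β p‖ ≤ 1) :
    ∑ p, ‖β p‖ ≤ 4 := by
  have key : ∀ p, ‖β p‖ ^ 2 ≤ 2 * (β p).re := by
    intro p
    have h1 := h {p}
    simp only [Finset.sum_singleton] at h1
    have h2 : ‖1 - β p‖ ^ 2 ≤ 1 := by nlinarith [norm_nonneg (1 - β p)]
    have e1 : ‖1 - β p‖ ^ 2 = Quaternion.normSq (1 - β p) := by
      rw [sq, ← Quaternion.normSq_eq_norm_mul_self]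
    have e2 : ‖β p‖ ^ 2 = Quaternion.normSq (β p) := by
      rw [sq, ← Quaternion.normSq_eq_norm_mul_self]
    rw [e1] at h2
    rw [e2]
    simp only [Quaternion.normSq_def', Quaternion.re_sub, Quaternion.imI_sub,
      Quaternion.imJ_sub, Quaternion.imK_sub, Quaternion.re_one, Quaternion.imI_one,
      Quaternion.imJ_one, Quaternion.imK_one] at h2 ⊢
    nlinarith
  have hS : ‖∑ p, β p‖ ≤ 2 := by
    have h1 := h Finset.univ
    calc ‖∑ p, β p‖ = ‖(1 : Quaternion ℝ) - (1 - ∑ p, β p)‖ := by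
          rw [sub_sub_cancel]
      _ ≤ ‖(1 : Quaternion ℝ)‖ + ‖1 - ∑ p, β p‖ := norm_sub_le _ _
      _ ≤ 1 + 1 := by rw [norm_one]; linarith
      _ = 2 := by norm_num
  have hre : (∑ p, β p).re ≤ ‖∑ p, β p‖ := by
    set q := ∑ p, β p with hq
    have h1 : ‖q‖ ^ 2 = Quaternion.normSq q := by
      rw [sq, ← Quaternion.normSq_eq_norm_mul_self]
    have h2 : q.re ^ 2 ≤ ‖q‖ ^ 2 := by
      rw [h1, Quaternion.normSq_def']; nlinarith [sq_nonneg q.imI, sq_nonneg q.imJ, sq_nonneg q.imK]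
    nlinarith [norm_nonneg q]
  have hsum2 : ∑ p, ‖β p‖ ^ 2 ≤ 4 := by
    have h3 : ∑ p, ‖β p‖ ^ 2 ≤ ∑ p, 2 * (β p).re :=
      Finset.sum_le_sum fun p _ => key p
    have hre2 : (∑ p, β p).re = ∑ p, (β p).re := by
      rw [Fin.sum_univ_four, Fin.sum_univ_four]
      simp [Quaternion.re_add]
    calc ∑ p, ‖β p‖ ^ 2 ≤ ∑ p, 2 * (β p).re := h3
      _ = 2 * (∑ p, β p).re := by rw [hre2, Finset.mul_sum]
      _ ≤ 2 * ‖∑ p, β p‖ := by linarith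
      _ ≤ 4 := by linarith
  rw [Fin.sum_univ_four] at hsum2 ⊢
  nlinarith [norm_nonneg (β 0), norm_nonneg (β 1), norm_nonneg (β 2), norm_nonneg (β 3),
    sq_nonneg (‖β 0‖ - ‖β 1‖), sq_nonneg (‖β 0‖ - ‖β 2‖), sq_nonneg (‖β 0‖ - ‖β 3‖),
    sq_nonneg (‖β 1‖ - ‖β 2‖), sq_nonneg (‖β 1‖ - ‖β 3‖), sq_nonneg (‖β 2‖ - ‖β 3‖)]
end

section
/- Let β₁, β₂, β₃, β₄ be quaternions with |1 - ∑_{p∈A} β_p| ≤ 1 for every subset A of {1,2,3,4}, and suppose ∑_{p=1}^{4} |β_p| = 4. Then each β_p has real part 1/2, each has norm 1, and for distinct p,q the imaginary (vector) parts v_p, v_q of β_p, β_q satisfy ⟨v_p, v_p⟩ = 3/4 and ⟨v_p, v_q⟩ = -1/4. -/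
set_option maxHeartbeats 4000000

open Quaternion

theorem stmt_14 (β : Fin 4 → Quaternion ℝ)
    (h : ∀ A : Finset (Fin 4), ‖1 - ∑ p ∈ A, β p‖ ≤ 1)
    (heq : ∑ p, ‖β p‖ = 4) :
    (∀ p, (β p).re = 1 / 2) ∧ (∀ p, ‖β p‖ = 1) ∧
      (∀ p, (β p).imI ^ 2 + (β p).imJ ^ 2 + (β p).imK ^ 2 = 3 / 4) ∧
      ∀ p q, p ≠ q →
        (β p).imI * (β q).imI + (β p).imJ * (β q).imJ + (β p).imK * (β q).imK
          = -(1 / 4) := by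
  have key : ∀ A : Finset (Fin 4),
      (1 - (∑ p ∈ A, β p).re)^2 + (∑ p ∈ A, β p).imI^2
        + (∑ p ∈ A, β p).imJ^2 + (∑ p ∈ A, β p).imK^2 ≤ 1 := by
    intro A
    have h1 := h A
    have h2 : normSq (1 - ∑ p ∈ A, β p) ≤ 1 := by
      rw [normSq_eq_norm_mul_self]
      nlinarith [norm_nonneg (1 - ∑ p ∈ A, β p)]
    rw [normSq_def'] at h2
    simp only [Quaternion.re_sub, Quaternion.imI_sub, Quaternion.imJ_sub, Quaternion.imK_sub,
      Quaternion.re_one, Quaternion.imI_one, Quaternion.imJ_one, Quaternion.imK_one] at h2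
    nlinarith [h2]
  -- norms squared
  have hr : ∀ p, ‖β p‖^2 = (β p).re^2 + (β p).imI^2 + (β p).imJ^2 + (β p).imK^2 := by
    intro p
    rw [sq, ← normSq_eq_norm_mul_self, normSq_def']
  -- singleton inequality
  have hsing : ∀ p, (β p).re^2 + (β p).imI^2 + (β p).imJ^2 + (β p).imK^2 ≤ 2*(β p).re := by
    intro p
    have h1 := key {p}
    simp only [Finset.sum_singleton] at h1
    nlinarith [h1]
  -- real part at most norm
  have hre_le : ∀ p, (β p).re ≤ ‖β p‖ := by
    intro p
    nlinarith [hr p, norm_nonneg (β p), sq_nonneg ((β p).imI), sq_nonneg ((β p).imJ),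
      sq_nonneg ((β p).imK), sq_nonneg (‖β p‖ - (β p).re), sq_nonneg (‖β p‖ + (β p).re)]
  -- universal set inequality, expanded
  have huniv := key Finset.univ
  rw [Fin.sum_univ_four] at huniv
  simp only [Quaternion.re_add, Quaternion.imI_add, Quaternion.imJ_add, Quaternion.imK_add]
    at huniv
  rw [Fin.sum_univ_four] at heq
  -- sum of real parts at most 2
  have hS : (β 0).re + (β 1).re + (β 2).re + (β 3).re ≤ 2 := by
    nlinarith [huniv, sq_nonneg ((β 0).re + (β 1).re + (β 2).re + (β 3).re - 2),
      sq_nonneg ((β 0).imI + (β 1).imI + (β 2).imI + (β 3).imI),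
      sq_nonneg ((β 0).imJ + (β 1).imJ + (β 2).imJ + (β 3).imJ),
      sq_nonneg ((β 0).imK + (β 1).imK + (β 2).imK + (β 3).imK)]
  -- each norm equals 1
  have hsq4 : ‖β 0‖^2 + ‖β 1‖^2 + ‖β 2‖^2 + ‖β 3‖^2 ≤ 4 := by
    have := hsing 0; have := hsing 1; have := hsing 2; have := hsing 3
    have := hr 0; have := hr 1; have := hr 2; have := hr 3
    linarith
  have hzsum : (‖β 0‖ - 1)^2 + (‖β 1‖ - 1)^2 + (‖β 2‖ - 1)^2 + (‖β 3‖ - 1)^2 ≤ 0 := by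
    nlinarith [hsq4, heq]
  have hnorm : ∀ p, ‖β p‖ = 1 := by
    have e0 : (‖β 0‖ - 1)^2 ≤ 0 := by
      linarith [hzsum, sq_nonneg (‖β 1‖ - 1), sq_nonneg (‖β 2‖ - 1), sq_nonneg (‖β 3‖ - 1)]
    have e1 : (‖β 1‖ - 1)^2 ≤ 0 := by
      linarith [hzsum, sq_nonneg (‖β 0‖ - 1), sq_nonneg (‖β 2‖ - 1), sq_nonneg (‖β 3‖ - 1)]
    have e2 : (‖β 2‖ - 1)^2 ≤ 0 := by
      linarith [hzsum, sq_nonneg (‖β 0‖ - 1), sq_nonneg (‖β 1‖ - 1), sq_nonneg (‖β 3‖ - 1)]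
    have e3 : (‖β 3‖ - 1)^2 ≤ 0 := by
      linarith [hzsum, sq_nonneg (‖β 0‖ - 1), sq_nonneg (‖β 1‖ - 1), sq_nonneg (‖β 2‖ - 1)]
    have f0 : ‖β 0‖ - 1 = 0 := pow_eq_zero_iff two_ne_zero |>.mp (le_antisymm e0 (sq_nonneg _))
    have f1 : ‖β 1‖ - 1 = 0 := pow_eq_zero_iff two_ne_zero |>.mp (le_antisymm e1 (sq_nonneg _))
    have f2 : ‖β 2‖ - 1 = 0 := pow_eq_zero_iff two_ne_zero |>.mp (le_antisymm e2 (sq_nonneg _))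
    have f3 : ‖β 3‖ - 1 = 0 := pow_eq_zero_iff two_ne_zero |>.mp (le_antisymm e3 (sq_nonneg _))
    intro p
    fin_cases p
    · show ‖β 0‖ = 1; linarith
    · show ‖β 1‖ = 1; linarith
    · show ‖β 2‖ = 1; linarith
    · show ‖β 3‖ = 1; linarith
  -- norm squared equals 1
  have hns1 : ∀ p, (β p).re^2 + (β p).imI^2 + (β p).imJ^2 + (β p).imK^2 = 1 := by
    intro p
    have := hr p
    rw [hnorm p] at this
    linarith
  -- each real part equals 1/2
  have hre : ∀ p, (β p).re = 1/2 := by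
    have g : ∀ p, (1:ℝ)/2 ≤ (β p).re := by
      intro p
      have := hsing p
      have := hns1 p
      linarith
    have g0 := g 0; have g1 := g 1; have g2 := g 2; have g3 := g 3
    intro p
    fin_cases p
    · show (β 0).re = 1/2; linarith
    · show (β 1).re = 1/2; linarith
    · show (β 2).re = 1/2; linarith
    · show (β 3).re = 1/2; linarith
  -- imaginary norms
  have himsq : ∀ p, (β p).imI^2 + (β p).imJ^2 + (β p).imK^2 = 3/4 := by
    intro p
    have := hns1 p
    have := hre p
    nlinarith
  -- sums of imaginary parts vanish
  have hXYZ : ((β 0).imI + (β 1).imI + (β 2).imI + (β 3).imI)^2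
      + ((β 0).imJ + (β 1).imJ + (β 2).imJ + (β 3).imJ)^2
      + ((β 0).imK + (β 1).imK + (β 2).imK + (β 3).imK)^2 ≤ 0 := by
    have := hre 0; have := hre 1; have := hre 2; have := hre 3
    nlinarith [huniv]
  have hX : (β 0).imI + (β 1).imI + (β 2).imI + (β 3).imI = 0 := by
    have e : ((β 0).imI + (β 1).imI + (β 2).imI + (β 3).imI)^2 ≤ 0 := by
      linarith [hXYZ, sq_nonneg ((β 0).imJ + (β 1).imJ + (β 2).imJ + (β 3).imJ),
        sq_nonneg ((β 0).imK + (β 1).imK + (β 2).imK + (β 3).imK)]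
    exact pow_eq_zero_iff two_ne_zero |>.mp (le_antisymm e (sq_nonneg _))
  have hY : (β 0).imJ + (β 1).imJ + (β 2).imJ + (β 3).imJ = 0 := by
    have e : ((β 0).imJ + (β 1).imJ + (β 2).imJ + (β 3).imJ)^2 ≤ 0 := by
      linarith [hXYZ, sq_nonneg ((β 0).imI + (β 1).imI + (β 2).imI + (β 3).imI),
        sq_nonneg ((β 0).imK + (β 1).imK + (β 2).imK + (β 3).imK)]
    exact pow_eq_zero_iff two_ne_zero |>.mp (le_antisymm e (sq_nonneg _))
  have hZ : (β 0).imK + (β 1).imK + (β 2).imK + (β 3).imK = 0 := by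
    have e : ((β 0).imK + (β 1).imK + (β 2).imK + (β 3).imK)^2 ≤ 0 := by
      linarith [hXYZ, sq_nonneg ((β 0).imI + (β 1).imI + (β 2).imI + (β 3).imI),
        sq_nonneg ((β 0).imJ + (β 1).imJ + (β 2).imJ + (β 3).imJ)]
    exact pow_eq_zero_iff two_ne_zero |>.mp (le_antisymm e (sq_nonneg _))
  -- pair inequality
  have hpair : ∀ p q, p ≠ q →
      (β p).imI * (β q).imI + (β p).imJ * (β q).imJ + (β p).imK * (β q).imK ≤ -(1/4) := by
    intro p q hne
    have h1 := key {p, q}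
    rw [Finset.sum_pair hne] at h1
    simp only [Quaternion.re_add, Quaternion.imI_add, Quaternion.imJ_add, Quaternion.imK_add]
      at h1
    have := hre p; have := hre q; have := himsq p; have := himsq q
    nlinarith [h1]
  -- row sums
  have hrow0 : ((β 0).imI * (β 1).imI + (β 0).imJ * (β 1).imJ + (β 0).imK * (β 1).imK)
      + ((β 0).imI * (β 2).imI + (β 0).imJ * (β 2).imJ + (β 0).imK * (β 2).imK)
      + ((β 0).imI * (β 3).imI + (β 0).imJ * (β 3).imJ + (β 0).imK * (β 3).imK) = -(3/4) := by
    linear_combination (β 0).imI * hX + (β 0).imJ * hY + (β 0).imK * hZ - himsq 0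
  have hrow1 : ((β 1).imI * (β 0).imI + (β 1).imJ * (β 0).imJ + (β 1).imK * (β 0).imK)
      + ((β 1).imI * (β 2).imI + (β 1).imJ * (β 2).imJ + (β 1).imK * (β 2).imK)
      + ((β 1).imI * (β 3).imI + (β 1).imJ * (β 3).imJ + (β 1).imK * (β 3).imK) = -(3/4) := by
    linear_combination (β 1).imI * hX + (β 1).imJ * hY + (β 1).imK * hZ - himsq 1
  have hrow2 : ((β 2).imI * (β 0).imI + (β 2).imJ * (β 0).imJ + (β 2).imK * (β 0).imK)
      + ((β 2).imI * (β 1).imI + (β 2).imJ * (β 1).imJ + (β 2).imK * (β 1).imK)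
      + ((β 2).imI * (β 3).imI + (β 2).imJ * (β 3).imJ + (β 2).imK * (β 3).imK) = -(3/4) := by
    linear_combination (β 2).imI * hX + (β 2).imJ * hY + (β 2).imK * hZ - himsq 2
  have hrow3 : ((β 3).imI * (β 0).imI + (β 3).imJ * (β 0).imJ + (β 3).imK * (β 0).imK)
      + ((β 3).imI * (β 1).imI + (β 3).imJ * (β 1).imJ + (β 3).imK * (β 1).imK)
      + ((β 3).imI * (β 2).imI + (β 3).imJ * (β 2).imJ + (β 3).imK * (β 2).imK) = -(3/4) := by
    linear_combination (β 3).imI * hX + (β 3).imJ * hY + (β 3).imK * hZ - himsq 3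
  have g01 : (β 0).imI * (β 1).imI + (β 0).imJ * (β 1).imJ + (β 0).imK * (β 1).imK = -(1/4) := by
    linarith [hrow0, hpair 0 1 (by decide), hpair 0 2 (by decide), hpair 0 3 (by decide)]
  have g02 : (β 0).imI * (β 2).imI + (β 0).imJ * (β 2).imJ + (β 0).imK * (β 2).imK = -(1/4) := by
    linarith [hrow0, hpair 0 1 (by decide), hpair 0 2 (by decide), hpair 0 3 (by decide)]
  have g03 : (β 0).imI * (β 3).imI + (β 0).imJ * (β 3).imJ + (β 0).imK * (β 3).imK = -(1/4) := by
    linarith [hrow0, hpair 0 1 (by decide), hpair 0 2 (by decide), hpair 0 3 (by decide)]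
  have g10 : (β 1).imI * (β 0).imI + (β 1).imJ * (β 0).imJ + (β 1).imK * (β 0).imK = -(1/4) := by
    linarith [hrow1, hpair 1 0 (by decide), hpair 1 2 (by decide), hpair 1 3 (by decide)]
  have g12 : (β 1).imI * (β 2).imI + (β 1).imJ * (β 2).imJ + (β 1).imK * (β 2).imK = -(1/4) := by
    linarith [hrow1, hpair 1 0 (by decide), hpair 1 2 (by decide), hpair 1 3 (by decide)]
  have g13 : (β 1).imI * (β 3).imI + (β 1).imJ * (β 3).imJ + (β 1).imK * (β 3).imK = -(1/4) := by
    linarith [hrow1, hpair 1 0 (by decide), hpair 1 2 (by decide), hpair 1 3 (by decide)]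
  have g20 : (β 2).imI * (β 0).imI + (β 2).imJ * (β 0).imJ + (β 2).imK * (β 0).imK = -(1/4) := by
    linarith [hrow2, hpair 2 0 (by decide), hpair 2 1 (by decide), hpair 2 3 (by decide)]
  have g21 : (β 2).imI * (β 1).imI + (β 2).imJ * (β 1).imJ + (β 2).imK * (β 1).imK = -(1/4) := by
    linarith [hrow2, hpair 2 0 (by decide), hpair 2 1 (by decide), hpair 2 3 (by decide)]
  have g23 : (β 2).imI * (β 3).imI + (β 2).imJ * (β 3).imJ + (β 2).imK * (β 3).imK = -(1/4) := by
    linarith [hrow2, hpair 2 0 (by decide), hpair 2 1 (by decide), hpair 2 3 (by decide)]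
  have g30 : (β 3).imI * (β 0).imI + (β 3).imJ * (β 0).imJ + (β 3).imK * (β 0).imK = -(1/4) := by
    linarith [hrow3, hpair 3 0 (by decide), hpair 3 1 (by decide), hpair 3 2 (by decide)]
  have g31 : (β 3).imI * (β 1).imI + (β 3).imJ * (β 1).imJ + (β 3).imK * (β 1).imK = -(1/4) := by
    linarith [hrow3, hpair 3 0 (by decide), hpair 3 1 (by decide), hpair 3 2 (by decide)]
  have g32 : (β 3).imI * (β 2).imI + (β 3).imJ * (β 2).imJ + (β 3).imK * (β 2).imK = -(1/4) := by
    linarith [hrow3, hpair 3 0 (by decide), hpair 3 1 (by decide), hpair 3 2 (by decide)]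
  refine ⟨hre, hnorm, himsq, ?_⟩
  intro p q hne
  fin_cases p <;> fin_cases q
  · exact absurd rfl hne
  · exact g01
  · exact g02
  · exact g03
  · exact g10
  · exact absurd rfl hne
  · exact g12
  · exact g13
  · exact g20
  · exact g21
  · exact absurd rfl hne
  · exact g23
  · exact g30
  · exact g31
  · exact g32
  · exact absurd rfl hne
end

section
/- Every Sylvester-Gallai configuration in the real projective plane is collinear: if S is a finite set of points in ℙ²(ℝ) such that for any two distinct points x, y ∈ S there is a third point z ∈ S, distinct from x and y, collinear with x and y, then all points of S lie on one projective line. -/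
open RealInnerProductSpace

variable {E : Type*} [NormedAddCommGroup E] [InnerProductSpace ℝ E]

/-- Foot of perpendicular from `p` to the line through `a` and `b`. -/
noncomputable def sgFoot (p a b : E) : E :=
  a + (⟪p - a, b - a⟫ / ‖b - a‖ ^ 2) • (b - a)

lemma sgFoot_inner (p a b : E) (hab : a ≠ b) :
    ⟪p - sgFoot p a b, b - a⟫ = 0 := by
  have hu : ‖b - a‖ ^ 2 ≠ 0 :=
    pow_ne_zero 2 (norm_ne_zero_iff.2 (sub_ne_zero.2 (Ne.symm hab)))
  have expand : p - sgFoot p a b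
      = (p - a) - (⟪p - a, b - a⟫ / ‖b - a‖ ^ 2) • (b - a) := by
    simp only [sgFoot]; abel
  rw [expand, inner_sub_left, real_inner_smul_left, real_inner_self_eq_norm_sq]
  field_simp
  rw [div_self (norm_ne_zero_iff.2 (sub_ne_zero.2 (Ne.symm hab))), sub_self, mul_zero]

lemma sgFoot_mem (p a b : E) : sgFoot p a b ∈ line[ℝ, a, b] := by
  have := smul_vsub_vadd_mem_affineSpan_pair (⟪p - a, b - a⟫ / ‖b - a‖ ^ 2) a b
  simpa [sgFoot, vsub_eq_sub, vadd_eq_add, add_comm] using this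

lemma sgFoot_param {p a b w : E} (hw : w ∈ line[ℝ, a, b]) :
    ∃ s : ℝ, w = sgFoot p a b + s • (b - a) := by
  have h1 : w -ᵥ sgFoot p a b ∈ vectorSpan ℝ ({a, b} : Set E) := by
    rw [← direction_affineSpan]
    exact AffineSubspace.vsub_mem_direction hw (sgFoot_mem p a b)
  rw [mem_vectorSpan_pair_rev] at h1
  obtain ⟨r, hr⟩ := h1
  refine ⟨r, ?_⟩
  have h2 : w - sgFoot p a b = r • (b - a) := by rw [← vsub_eq_sub]; exact hr.symm
  rw [← h2]; abel

lemma sgFoot_dist_le {p a b : E} (hab : a ≠ b) {w : E} (hw : w ∈ line[ℝ, a, b]) :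
    ‖p - sgFoot p a b‖ ≤ ‖p - w‖ := by
  obtain ⟨s, rfl⟩ := sgFoot_param (p := p) hw
  have horth : ⟪p - sgFoot p a b, s • (b - a)⟫ = 0 := by
    rw [real_inner_smul_right, sgFoot_inner p a b hab, mul_zero]
  have : ‖p - (sgFoot p a b + s • (b - a))‖ ^ 2
      = ‖p - sgFoot p a b‖ ^ 2 + ‖s • (b - a)‖ ^ 2 := by
    have hrw : p - (sgFoot p a b + s • (b - a)) = (p - sgFoot p a b) - s • (b - a) := by abel
    rw [hrw, norm_sub_sq_real, horth]
    ring
  nlinarith [norm_nonneg (p - (sgFoot p a b + s • (b - a))), norm_nonneg (p - sgFoot p a b),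
    sq_nonneg ‖s • (b - a)‖]

lemma sgFoot_dist_pos {p a b : E} (hp : p ∉ line[ℝ, a, b]) :
    0 < ‖p - sgFoot p a b‖ := by
  rcases eq_or_lt_of_le (norm_nonneg (p - sgFoot p a b)) with h | h
  · exfalso
    apply hp
    have : p = sgFoot p a b := by
      have := (norm_eq_zero.1 h.symm)
      rwa [sub_eq_zero] at this
    rw [this]; exact sgFoot_mem p a b
  · exact h

lemma sg_pair_nonneg {s t : ℝ} (hst : s ≠ t) (hs : 0 ≤ s) (ht : 0 ≤ t) :
    (s ≠ 0 ∧ ∃ c, 0 ≤ c ∧ c ≤ 1 ∧ t = c * s) ∨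
      (t ≠ 0 ∧ ∃ c, 0 ≤ c ∧ c ≤ 1 ∧ s = c * t) := by
  rcases le_or_gt s t with hle | hlt
  · have htne : t ≠ 0 := by rintro rfl; exact hst (le_antisymm hle hs)
    have htpos : 0 < t := lt_of_le_of_ne (hs.trans hle) (Ne.symm htne)
    refine Or.inr ⟨htpos.ne', s / t, div_nonneg hs htpos.le, (div_le_one htpos).2 hle, ?_⟩
    rw [div_mul_cancel₀ _ htpos.ne']
  · have hspos : 0 < s := lt_of_le_of_lt ht hlt
    refine Or.inl ⟨hspos.ne', t / s, div_nonneg ht hspos.le, (div_le_one hspos).2 hlt.le, ?_⟩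
    rw [div_mul_cancel₀ _ hspos.ne']

lemma sg_pair {s t : ℝ} (hst : s ≠ t)
    (h : (0 ≤ s ∧ 0 ≤ t) ∨ (s ≤ 0 ∧ t ≤ 0)) :
    (s ≠ 0 ∧ ∃ c, 0 ≤ c ∧ c ≤ 1 ∧ t = c * s) ∨
      (t ≠ 0 ∧ ∃ c, 0 ≤ c ∧ c ≤ 1 ∧ s = c * t) := by
  rcases h with ⟨hs, ht⟩ | ⟨hs, ht⟩
  · exact sg_pair_nonneg hst hs ht
  · have := sg_pair_nonneg (s := -s) (t := -t) (by simpa using hst)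
      (by linarith) (by linarith)
    rcases this with ⟨h0, c, hc0, hc1, hc⟩ | ⟨h0, c, hc0, hc1, hc⟩
    · exact Or.inl ⟨by simpa using h0, c, hc0, hc1, by linarith [hc]⟩
    · exact Or.inr ⟨by simpa using h0, c, hc0, hc1, by linarith [hc]⟩

lemma sg_sign_pair (t : Fin 3 → ℝ) :
    ∃ i j : Fin 3, i ≠ j ∧ ((0 ≤ t i ∧ 0 ≤ t j) ∨ (t i ≤ 0 ∧ t j ≤ 0)) := by
  rcases le_total 0 (t 0) with h0 | h0 <;> rcases le_total 0 (t 1) with h1 | h1 <;>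
    rcases le_total 0 (t 2) with h2 | h2
  · exact ⟨0, 1, by decide, Or.inl ⟨h0, h1⟩⟩
  · exact ⟨0, 1, by decide, Or.inl ⟨h0, h1⟩⟩
  · exact ⟨0, 2, by decide, Or.inl ⟨h0, h2⟩⟩
  · exact ⟨1, 2, by decide, Or.inr ⟨h1, h2⟩⟩
  · exact ⟨1, 2, by decide, Or.inl ⟨h1, h2⟩⟩
  · exact ⟨0, 2, by decide, Or.inr ⟨h0, h2⟩⟩
  · exact ⟨0, 1, by decide, Or.inr ⟨h0, h1⟩⟩
  · exact ⟨0, 1, by decide, Or.inr ⟨h0, h1⟩⟩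

lemma sg_pigeonhole {t : Fin 3 → ℝ} (hinj : ∀ i j : Fin 3, i ≠ j → t i ≠ t j) :
    ∃ i j : Fin 3, i ≠ j ∧ t j ≠ 0 ∧ ∃ c : ℝ, 0 ≤ c ∧ c ≤ 1 ∧ t i = c * t j := by
  obtain ⟨i, j, hij, hsign⟩ := sg_sign_pair t
  rcases sg_pair (hinj i j hij) hsign with ⟨h0, c, hc0, hc1, hc⟩ | ⟨h0, c, hc0, hc1, hc⟩
  · exact ⟨j, i, hij.symm, h0, c, hc0, hc1, hc⟩
  · exact ⟨i, j, hij, h0, c, hc0, hc1, hc⟩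

theorem sg_collinear (S : Finset E)
    (h : ∀ x ∈ S, ∀ y ∈ S, x ≠ y → ∃ z ∈ S, z ≠ x ∧ z ≠ y ∧
      Collinear ℝ ({x, y, z} : Set E)) :
    Collinear ℝ (S : Set E) := by
  classical
  by_contra hnc
  -- there exists a noncollinear triple
  have hex : ∃ p ∈ S, ∃ a ∈ S, ∃ b ∈ S, a ≠ b ∧ p ∉ line[ℝ, a, b] := by
    by_contra hno
    push_neg at hno
    apply hnc
    rcases Set.subsingleton_or_nontrivial (S : Set E) with hsub | hnt
    · rcases hsub.eq_empty_or_singleton with he | ⟨x, he⟩ <;> rw [he]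
      · exact collinear_empty ℝ E
      · exact collinear_singleton ℝ x
    · obtain ⟨a, ha, b, hb, hab⟩ := hnt
      rw [collinear_iff_of_mem ha]
      refine ⟨b - a, fun p hp => ?_⟩
      have hpl := hno p hp a ha b hb hab
      have h1 : p -ᵥ a ∈ vectorSpan ℝ ({a, b} : Set E) := by
        rw [← direction_affineSpan]
        exact AffineSubspace.vsub_mem_direction hpl (left_mem_affineSpan_pair ℝ a b)
      rw [mem_vectorSpan_pair_rev] at h1
      obtain ⟨r, hr⟩ := h1
      have hr' : r • (b - a) = p - a := by rw [← vsub_eq_sub b a, ← vsub_eq_sub p a]; exact hr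
      refine ⟨r, ?_⟩
      rw [vadd_eq_add, hr']
      abel
  obtain ⟨p0, hp0, a0, ha0, b0, hb0, hab0, hline0⟩ := hex
  set T : Finset (E × E × E) := (S ×ˢ S ×ˢ S).filter
      (fun t => t.2.1 ≠ t.2.2 ∧ t.1 ∉ line[ℝ, t.2.1, t.2.2]) with hT
  have hTne : T.Nonempty :=
    ⟨(p0, a0, b0), by simp [hT, Finset.mem_filter, Finset.mem_product, hp0, ha0, hb0, hab0, hline0]⟩
  obtain ⟨⟨p, a, b⟩, hmemT, hmin⟩ :=
    T.exists_min_image (fun t => ‖t.1 - sgFoot t.1 t.2.1 t.2.2‖) hTne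
  simp only [hT, Finset.mem_filter, Finset.mem_product] at hmemT
  obtain ⟨⟨hpS, haS, hbS⟩, hab, hpL⟩ := hmemT
  obtain ⟨z, hzS, hza, hzb, hcolz⟩ := h a haS b hbS hab
  have hzL : z ∈ line[ℝ, a, b] :=
    hcolz.mem_affineSpan_of_mem_of_ne (by simp) (by simp) (by simp) hab
  set q := sgFoot p a b with hq
  set u := b - a with hu
  set d0 := ‖p - q‖ with hd0def
  have hd0 : 0 < d0 := sgFoot_dist_pos hpL
  set P : Fin 3 → E := ![a, b, z] with hP
  have hPS : ∀ i, P i ∈ S := by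
    intro i; fin_cases i <;> simpa [hP] using by assumption
  have hPL : ∀ i, P i ∈ line[ℝ, a, b] := by
    intro i
    fin_cases i
    · exact left_mem_affineSpan_pair ℝ a b
    · exact right_mem_affineSpan_pair ℝ a b
    · exact hzL
  have hpar : ∀ i, ∃ s : ℝ, P i = q + s • u := fun i => sgFoot_param (hPL i)
  choose t ht using hpar
  have hPinj : ∀ i j : Fin 3, i ≠ j → P i ≠ P j := by
    have h01 : P 0 ≠ P 1 := by simpa [hP] using hab
    have h02 : P 0 ≠ P 2 := by simpa [hP] using hza.symm
    have h12 : P 1 ≠ P 2 := by simpa [hP] using hzb.symm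
    intro i j hij
    fin_cases i <;> fin_cases j <;>
      first
        | exact absurd rfl hij
        | exact h01 | exact h02 | exact h12
        | exact h01.symm | exact h02.symm | exact h12.symm
  have hune : u ≠ 0 := sub_ne_zero.2 (Ne.symm hab)
  have htinj : ∀ i j : Fin 3, i ≠ j → t i ≠ t j := by
    intro i j hij hts
    exact hPinj i j hij (by rw [ht i, ht j, hts])
  obtain ⟨i, j, hij, htj0, c, hc0, hc1, hc⟩ := sg_pigeonhole htinj
  set x := P i with hx
  set y := P j with hy
  have hxS : x ∈ S := hPS i
  have hyS : y ∈ S := hPS j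
  have hyL : y ∈ line[ℝ, a, b] := hPL j
  have hxy : x ≠ y := hPinj i j hij
  have hpy : p ≠ y := fun hh => hpL (hh ▸ hyL)
  -- x is not on the line through p and y
  have hxPL : x ∉ line[ℝ, p, y] := by
    intro hmem
    have hcol' : Collinear ℝ ({x, p, y} : Set E) :=
      collinear_insert_of_mem_affineSpan_pair hmem
    have hpmem : p ∈ line[ℝ, x, y] :=
      hcol'.mem_affineSpan_of_mem_of_ne (by simp) (by simp) (by simp) hxy
    have hle : line[ℝ, x, y] ≤ line[ℝ, a, b] := by
      apply affineSpan_le.2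
      rintro w (rfl | rfl)
      · exact hPL i
      · exact hPL j
    exact hpL (hle hpmem)
  -- the perpendicular foot from q to line (p,y)
  set m := y - p with hm
  have hmne : m ≠ 0 := sub_ne_zero.2 (Ne.symm hpy)
  have hmnorm : (0:ℝ) < ‖m‖ ^ 2 := pow_pos (norm_pos_iff.mpr hmne) 2
  set w := sgFoot q p y with hw
  have hwL : w ∈ line[ℝ, p, y] := sgFoot_mem q p y
  have hinner : ⟪q - p, m⟫ = d0 ^ 2 := by
    have hyq : y - q = t j • u := by rw [hy, ht j]; abel
    have hsplit : ⟪q - p, m⟫ = ⟪q - p, y - q⟫ + ⟪q - p, q - p⟫ := by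
      rw [← inner_add_right]
      congr 1
      rw [hm]; abel
    have horth : ⟪q - p, y - q⟫ = 0 := by
      rw [hyq, real_inner_smul_right]
      have hfi := sgFoot_inner p a b hab
      rw [← hq, ← hu] at hfi
      have h2 : ⟪q - p, u⟫ = 0 := by
        rw [show q - p = -(p - q) by abel, inner_neg_left, hfi, neg_zero]
      rw [h2, mul_zero]
    rw [hsplit, horth, zero_add, real_inner_self_eq_norm_sq, ← norm_neg,
      show -(q - p) = p - q by abel, ← hd0def]
  -- w is strictly closer to q than p is
  have hqw : ‖q - w‖ ^ 2 = d0 ^ 2 - d0 ^ 4 / ‖m‖ ^ 2 := by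
    have hwdef : w = p + (⟪q - p, m⟫ / ‖m‖ ^ 2) • m := rfl
    rw [hwdef, hinner]
    have hexp : q - (p + (d0 ^ 2 / ‖m‖ ^ 2) • m) = (q - p) - (d0 ^ 2 / ‖m‖ ^ 2) • m := by abel
    rw [hexp, norm_sub_sq_real, real_inner_smul_right, hinner, norm_smul]
    rw [show ‖q - p‖ = d0 by rw [← norm_neg, show -(q-p) = p - q by abel]]
    rw [Real.norm_eq_abs, abs_div, abs_of_nonneg (by positivity : (0:ℝ) ≤ d0 ^ 2),
      abs_of_nonneg (by positivity : (0:ℝ) ≤ ‖m‖ ^ 2)]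
    field_simp
    ring
  have hqwlt : ‖q - w‖ < d0 := by
    have h2 : ‖q - w‖ ^ 2 < d0 ^ 2 := by
      rw [hqw]
      have : 0 < d0 ^ 4 / ‖m‖ ^ 2 := by positivity
      linarith
    nlinarith [norm_nonneg (q - w)]
  -- the point on line (p,y) close to x
  set wc := w + c • (y - w) with hwc
  have hwcL : wc ∈ line[ℝ, p, y] := by
    have hmem := AffineSubspace.smul_vsub_vadd_mem (line[ℝ, p, y]) c
      (right_mem_affineSpan_pair ℝ p y) hwL hwL
    rw [hwc, add_comm]
    simpa [vsub_eq_sub, vadd_eq_add] using hmem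
  have hxq : x = q + c • (y - q) := by
    have hyq : y - q = t j • u := by rw [hy, ht j]; abel
    rw [hx, ht i, hc, hyq, smul_smul]
  have hxwc : x - wc = (1 - c) • (q - w) := by
    rw [hxq, hwc]
    module
  have hlt : ‖x - wc‖ < d0 := by
    rw [hxwc, norm_smul, Real.norm_eq_abs, abs_of_nonneg (by linarith : (0:ℝ) ≤ 1 - c)]
    calc (1 - c) * ‖q - w‖ ≤ 1 * ‖q - w‖ :=
          mul_le_mul_of_nonneg_right (by linarith) (norm_nonneg _)
      _ = ‖q - w‖ := one_mul _
      _ < d0 := hqwlt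
  have hxT : (x, p, y) ∈ T := by
    simp only [hT, Finset.mem_filter, Finset.mem_product]
    exact ⟨⟨hxS, hpS, hyS⟩, hpy, hxPL⟩
  have hmin' : d0 ≤ ‖x - sgFoot x p y‖ := hmin (x, p, y) hxT
  have hle2 : ‖x - sgFoot x p y‖ ≤ ‖x - wc‖ := sgFoot_dist_le hpy hwcL
  linarith

theorem stmt_19 (S : Finset (Projectivization ℝ (Fin 3 → ℝ)))
    (hSG : ∀ x ∈ S, ∀ y ∈ S, x ≠ y → ∃ z ∈ S, z ≠ x ∧ z ≠ y ∧
      ¬ LinearIndependent ℝ ![x.rep, y.rep, z.rep]) :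
    ∃ f : (Fin 3 → ℝ) →ₗ[ℝ] ℝ, f ≠ 0 ∧
      ∀ p ∈ S, p.submodule ≤ LinearMap.ker f := by
  classical
  -- a linear functional not vanishing on any representative
  have hg : ∃ g : Module.Dual ℝ (Fin 3 → ℝ), ∀ p ∈ S, g p.rep ≠ 0 := by
    set Ks : Finset (Subspace ℝ (Module.Dual ℝ (Fin 3 → ℝ))) :=
      S.image (fun p => LinearMap.ker (Module.Dual.eval ℝ (Fin 3 → ℝ) p.rep)) with hKs
    have htop : ⊤ ∉ Ks := by
      rw [hKs]
      simp only [Finset.mem_image, not_exists, not_and]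
      intro p hp hker
      rw [LinearMap.ker_eq_top] at hker
      have hz : ∀ φ : Module.Dual ℝ (Fin 3 → ℝ), φ p.rep = 0 := by
        intro φ
        have := LinearMap.congr_fun hker φ
        simpa using this
      exact p.rep_nonzero ((Module.forall_dual_apply_eq_zero_iff ℝ p.rep).1 hz)
    have hne := Subspace.biUnion_ne_univ_of_top_notMem htop
    rw [Set.ne_univ_iff_exists_notMem] at hne
    obtain ⟨g, hgmem⟩ := hne
    refine ⟨g, fun p hp hz => hgmem ?_⟩
    rw [Set.mem_iUnion₂]
    refine ⟨_, Finset.mem_image_of_mem _ hp, ?_⟩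
    simpa [LinearMap.mem_ker] using hz
  obtain ⟨g, hgS⟩ := hg
  set L := WithLp.linearEquiv 2 ℝ (Fin 3 → ℝ) with hL
  set v : Projectivization ℝ (Fin 3 → ℝ) → EuclideanSpace ℝ (Fin 3) :=
    fun p => L.symm ((g p.rep)⁻¹ • p.rep) with hv
  have hLv : ∀ p, L (v p) = (g p.rep)⁻¹ • p.rep := fun p => L.apply_symm_apply _
  have hrep : ∀ p ∈ S, p.rep = (g p.rep) • L (v p) := by
    intro p hp
    rw [hLv, smul_smul, mul_inv_cancel₀ (hgS p hp), one_smul]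
  have hvinj : ∀ p ∈ S, ∀ q ∈ S, v p = v q → p = q := by
    intro p hp q hq hpq
    have h1 : (g p.rep)⁻¹ • p.rep = (g q.rep)⁻¹ • q.rep := by
      have h2 := congrArg L hpq
      rwa [hLv, hLv] at h2
    have h2 : (g p.rep * (g q.rep)⁻¹) • q.rep = p.rep := by
      rw [mul_smul, ← h1, smul_smul, mul_inv_cancel₀ (hgS p hp), one_smul]
    conv_lhs => rw [← p.mk_rep]
    conv_rhs => rw [← q.mk_rep]
    rw [Projectivization.mk_eq_mk_iff']
    exact ⟨_, h2⟩
  set T : Finset (EuclideanSpace ℝ (Fin 3)) := S.image v with hT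
  have hTcol : Collinear ℝ (T : Set (EuclideanSpace ℝ (Fin 3))) := by
    apply sg_collinear
    intro x hx y hy hxy
    rw [hT, Finset.mem_image] at hx hy
    obtain ⟨p, hpS, rfl⟩ := hx
    obtain ⟨q, hqS, rfl⟩ := hy
    have hpq : p ≠ q := fun hh => hxy (by rw [hh])
    obtain ⟨z, hzS, hzp, hzq, hdep⟩ := hSG p hpS q hqS hpq
    refine ⟨v z, Finset.mem_image_of_mem _ hzS, ?_, ?_, ?_⟩
    · exact fun hh => hzp (hvinj z hzS p hpS hh)
    · exact fun hh => hzq (hvinj z hzS q hqS hh)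
    · -- collinearity of the three normalized points
      rw [Fintype.not_linearIndependent_iff] at hdep
      obtain ⟨c, hcsum, i0, hi0⟩ := hdep
      set R : Fin 3 → (Fin 3 → ℝ) := ![p.rep, q.rep, z.rep] with hR
      set pts : Fin 3 → EuclideanSpace ℝ (Fin 3) := ![v p, v q, v z] with hpts
      have hRS : ∀ i, R i = g (R i) • L (pts i) := by
        intro i
        fin_cases i
        · exact hrep p hpS
        · exact hrep q hqS
        · exact hrep z hzS
      have hgR : ∀ i, g (R i) ≠ 0 := by
        intro i
        fin_cases i
        · exact hgS p hpS
        · exact hgS q hqS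
        · exact hgS z hzS
      set d : Fin 3 → ℝ := fun i => c i * g (R i) with hd
      have hLsum : ∑ i, d i • L (pts i) = 0 := by
        have : ∑ i, d i • L (pts i) = ∑ i, c i • R i := by
          apply Finset.sum_congr rfl
          intro i _
          rw [hd, hR]
          rw [show (![p.rep, q.rep, z.rep] : Fin 3 → Fin 3 → ℝ) i = R i from rfl]
          rw [hRS i, smul_smul]
        rw [this]
        exact hcsum
      have hsum0 : ∑ i, d i • pts i = 0 := by
        have := congrArg L.symm hLsum
        rw [map_sum] at this
        simpa [map_smul] using this
      have hdsum0 : ∑ i, d i = 0 := by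
        have h5 := congrArg g hcsum
        rw [map_sum, map_zero] at h5
        have : ∀ i, g (c i • R i) = d i := by
          intro i
          rw [map_smul, hd]
          rfl
        rw [← h5]
        apply Finset.sum_congr rfl
        intro i _
        rw [hR] at this
        exact (this i).symm
      have hd0 : d i0 ≠ 0 := mul_ne_zero hi0 (hgR i0)
      rw [show v p = pts 0 from rfl, show v q = pts 1 from rfl, show v z = pts 2 from rfl]
      rw [show ({pts 0, pts 1, pts 2} : Set (EuclideanSpace ℝ (Fin 3)))
        = {pts 0, pts 1, pts 2} from rfl]
      rw [collinear_iff_not_affineIndependent_set]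
      intro hAI
      have := affineIndependent_iff.1 (by convert hAI using 1)
        Finset.univ d hdsum0 (by simpa [Fin.sum_univ_three] using hsum0) i0 (Finset.mem_univ _)
      exact hd0 this
  -- build the functional
  rcases S.eq_empty_or_nonempty with rfl | ⟨p₀, hp₀⟩
  · refine ⟨LinearMap.proj 0, ?_, by simp⟩
    intro h0
    have := LinearMap.congr_fun h0 (fun _ => 1)
    simp [LinearMap.proj] at this
  · have hvp₀T : v p₀ ∈ (T : Set (EuclideanSpace ℝ (Fin 3))) :=
      Finset.mem_coe.2 (Finset.mem_image_of_mem _ hp₀)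
    rw [collinear_iff_of_mem hvp₀T] at hTcol
    obtain ⟨dir, hdir⟩ := hTcol
    set W : Submodule ℝ (Fin 3 → ℝ) := Submodule.span ℝ {L dir, L (v p₀)} with hW
    have hmemW : ∀ p ∈ S, p.rep ∈ W := by
      intro p hp
      obtain ⟨r, hr⟩ := hdir (v p) (Finset.mem_coe.2 (Finset.mem_image_of_mem _ hp))
      have hLp : L (v p) = r • L dir + L (v p₀) := by
        rw [hr, vadd_eq_add, map_add, map_smul]
      rw [hrep p hp, hLp]
      exact W.smul_mem _ (W.add_mem (W.smul_mem _ (Submodule.subset_span (by simp)))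
        (Submodule.subset_span (by simp)))
    have hWne : W ≠ ⊤ := by
      intro htop
      have hle : Module.finrank ℝ W ≤ 2 := by
        have h6 := finrank_span_le_card (R := ℝ) ({L dir, L (v p₀)} : Set (Fin 3 → ℝ))
        have h7 : ({L dir, L (v p₀)} : Set (Fin 3 → ℝ)).toFinset.card ≤ 2 := by
          rw [Set.toFinset_insert, Set.toFinset_singleton]
          exact le_trans (Finset.card_insert_le _ _) (by simp)
        exact le_trans (by rw [hW]; exact h6) h7
      rw [htop, finrank_top] at hle
      have : Module.finrank ℝ (Fin 3 → ℝ) = 3 := Module.finrank_fin_fun ℝ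
      omega
    obtain ⟨x0, hx0⟩ : ∃ x0 : Fin 3 → ℝ, x0 ∉ W := by
      by_contra hno
      push_neg at hno
      exact hWne (Submodule.eq_top_iff'.2 hno)
    have hx0' : W.mkQ x0 ≠ 0 := by
      simpa [Submodule.Quotient.mk_eq_zero] using hx0
    obtain ⟨φ, hφ⟩ : ∃ φ : Module.Dual ℝ ((Fin 3 → ℝ) ⧸ W), φ (W.mkQ x0) ≠ 0 := by
      by_contra hno
      push_neg at hno
      exact hx0' ((Module.forall_dual_apply_eq_zero_iff ℝ _).1 hno)
    refine ⟨φ.comp W.mkQ, ?_, ?_⟩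
    · intro h0
      exact hφ (by simpa using LinearMap.congr_fun h0 x0)
    · intro p hp
      rw [Projectivization.submodule_eq, Submodule.span_le, Set.singleton_subset_iff]
      have : W.mkQ p.rep = 0 := (Submodule.Quotient.mk_eq_zero W).2 (hmemW p hp)
      simp [LinearMap.mem_ker, this]
end
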